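/- arXiv:1908.00837 — 8 statements merged into one kernel-verified Lean document; each statement's English description precedes it below -/
import Mathlib

section
/- Let K be a complete graph on a finite nonempty vertex set V, and suppose each edge of K is assigned a nonempty subset of the three colors {blue, red, green} (a 3-multicoloring); for a color χ, the graph K_χ on V has as edges those edges whose color set contains χ. Then at least one of the following holds: (L1) for some color χ, K_χ has a connected component containing all of V; (L2) there is a partition of V into four nonempty sets W, X, Y, Z such that every edge between W and X and every edge between Y and Z receives exactly the color set {blue}, every edge between W and Y and every edge between X and Z receives exactly {red}, and every edge between W and Z and every edge between X and Y receives exactly {green}; (L3) there is a partition of V into sets W, X, Y, Z with X, Y, Z nonempty such that the induced subgraph of K_blue on W ∪ X ∪ Y is connected, the induced subgraph of K_red on W ∪ X ∪ Z is connected, the induced subgraph of K_green on W ∪ Y ∪ Z is connected, every edge between X and Y receives exactly {blue}, every edge between X and Z receives exactly {red}, every edge between Y and Z receives exactly {green}, no edge between W and X receives green, no edge between W and Y receives red, and no edge between W and Z receives blue. -/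
universe u

/-- Given a `3`-multicoloring `χ` of the edges of the complete graph on `V`
(assigning each unordered pair a set of colors from `{0,1,2}` = {blue, red, green}),
`KGraph χ c` is the graph whose edges are those pairs whose color set contains `c`. -/
def KGraph {V : Type u} (χ : Sym2 V → Finset (Fin 3)) (c : Fin 3) : SimpleGraph V where
  Adj x y := x ≠ y ∧ c ∈ χ s(x, y)
  symm := by
    constructor
    rintro x y ⟨hxy, hc⟩
    exact ⟨hxy.symm, by rwa [Sym2.eq_swap]⟩
  loopless := by
    constructor
    rintro x ⟨h, -⟩
    exact h rfl

namespace StmtAux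

variable {V : Type u}

/-- Reachability in the color-`c` graph. -/
abbrev Rch (χ : Sym2 V → Finset (Fin 3)) (c : Fin 3) (x y : V) : Prop :=
  (KGraph χ c).Reachable x y

lemma reach_of_mem (χ : Sym2 V → Finset (Fin 3)) {c : Fin 3} {x y : V}
    (hc : c ∈ χ s(x, y)) : Rch χ c x y := by
  by_cases h : x = y
  · exact h ▸ SimpleGraph.Reachable.refl x
  · exact SimpleGraph.Adj.reachable ⟨h, hc⟩

lemma chi_eq_third (χ : Sym2 V → Finset (Fin 3))
    (hne : ∀ x y : V, x ≠ y → (χ s(x, y)).Nonempty)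
    {c c' c'' : Fin 3} (hall : ∀ e : Fin 3, e = c ∨ e = c' ∨ e = c'') {x y : V}
    (h1 : ¬ Rch χ c x y) (h2 : ¬ Rch χ c' x y) :
    χ s(x, y) = {c''} := by
  have hxy : x ≠ y := by rintro rfl; exact h1 (SimpleGraph.Reachable.refl x)
  rw [Finset.eq_singleton_iff_nonempty_unique_mem]
  refine ⟨hne x y hxy, fun e he => ?_⟩
  rcases hall e with rfl | rfl | rfl
  · exact absurd (reach_of_mem χ he) h1
  · exact absurd (reach_of_mem χ he) h2
  · rfl

lemma reach_third (χ : Sym2 V → Finset (Fin 3))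
    (hne : ∀ x y : V, x ≠ y → (χ s(x, y)).Nonempty)
    {c c' c'' : Fin 3} (hall : ∀ e : Fin 3, e = c ∨ e = c' ∨ e = c'') {x y : V}
    (h1 : ¬ Rch χ c x y) (h2 : ¬ Rch χ c' x y) :
    Rch χ c'' x y := by
  refine reach_of_mem χ (c := c'') ?_
  rw [chi_eq_third χ hne hall h1 h2]
  exact Finset.mem_singleton_self _

/-- The induced subgraph on a reachability class is connected. -/
lemma induce_reach_connected (H : SimpleGraph V) (b : V) :
    (H.induce {u | H.Reachable b u}).Connected := by
  set s : Set V := {u | H.Reachable b u} with hs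
  have hcl : ∀ ⦃x y : V⦄, x ∈ s → H.Adj x y → y ∈ s := fun x y hx h => hx.trans h.reachable
  have key : ∀ {u v : V} (w : H.Walk u v), ∀ hu : u ∈ s, ∃ hv : v ∈ s,
      (H.induce s).Reachable ⟨u, hu⟩ ⟨v, hv⟩ := by
    intro u v w
    induction w with
    | nil => intro hu; exact ⟨hu, SimpleGraph.Reachable.refl _⟩
    | cons h p ih =>
        intro hu
        have hx := hcl hu h
        obtain ⟨hv, hr⟩ := ih hx
        refine ⟨hv, SimpleGraph.Reachable.trans (SimpleGraph.Adj.reachable ?_) hr⟩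
        exact h
  haveI : Nonempty ↥s := ⟨⟨b, SimpleGraph.Reachable.refl b⟩⟩
  refine ⟨?_⟩
  rintro ⟨u, hu⟩ ⟨v, hv⟩
  obtain ⟨w⟩ := hu.symm.trans hv
  obtain ⟨hv', hr⟩ := key w hu
  exact hr

lemma proper_of_exists (χ : Sym2 V → Finset (Fin 3)) {c : Fin 3}
    (h : ∃ u w : V, ¬ Rch χ c u w) (p : V) : ∃ x, ¬ Rch χ c p x := by
  obtain ⟨u, w, huw⟩ := h
  by_contra hc
  push_neg at hc
  exact huw ((hc u).symm.trans (hc w))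

lemma not_conn (χ : Sym2 V → Finset (Fin 3)) {c : Fin 3} [Nonempty V]
    (h : ¬ (KGraph χ c).Connected) : ∃ u w : V, ¬ Rch χ c u w := by
  by_contra hc
  push_neg at hc
  exact h ⟨fun u w => hc u w⟩

/-- Given a covering pair of components (colors `c`, `c'`), produce a component of the
third color covering both complements. -/
lemma cover_extend (χ : Sym2 V → Finset (Fin 3))
    (hne : ∀ x y : V, x ≠ y → (χ s(x, y)).Nonempty)
    {c c' c'' : Fin 3} (hall : ∀ e : Fin 3, e = c ∨ e = c' ∨ e = c'') {p q : V}
    (hcov : ∀ v, Rch χ c p v ∨ Rch χ c' q v)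
    (hC : ∃ x, ¬ Rch χ c p x) (hD : ∃ y, ¬ Rch χ c' q y) :
    ∃ g, (∀ v, Rch χ c p v ∨ Rch χ c'' g v) ∧ (∀ v, Rch χ c' q v ∨ Rch χ c'' g v) := by
  obtain ⟨x0, hx0⟩ := hC
  obtain ⟨y0, hy0⟩ := hD
  have hx0D : Rch χ c' q x0 := (hcov x0).resolve_left hx0
  have hy0C : Rch χ c p y0 := (hcov y0).resolve_right hy0
  have key : ∀ w, ¬ Rch χ c p w → Rch χ c' q w → Rch χ c'' w y0 := by
    intro w hw hw'
    refine reach_third χ hne hall ?_ ?_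
    · exact fun h => hw (hy0C.trans h.symm)
    · exact fun h => hy0 (hw'.trans h)
  refine ⟨x0, fun v => ?_, fun v => ?_⟩
  · by_cases hv : Rch χ c p v
    · exact Or.inl hv
    · exact Or.inr ((key x0 hx0 hx0D).trans (key v hv ((hcov v).resolve_left hv)).symm)
  · by_cases hv : Rch χ c' q v
    · exact Or.inl hv
    · refine Or.inr ?_
      have hvC : Rch χ c p v := (hcov v).resolve_right hv
      refine (reach_third χ hne hall (x := v) (y := x0) ?_ ?_).symm
      · exact fun h => hx0 (hvC.trans h)
      · exact fun h => hv (hx0D.trans h.symm)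

end StmtAux

open StmtAux in
/-- Builder for alternative (L3) from three pairwise-covering components. -/
theorem L3build {V : Type u} [Fintype V] [DecidableEq V] (χ : Sym2 V → Finset (Fin 3))
    (hne : ∀ x y : V, x ≠ y → (χ s(x, y)).Nonempty) (p q g : V)
    (hBR : ∀ v, Rch χ 0 p v ∨ Rch χ 1 q v)
    (hBG : ∀ v, Rch χ 0 p v ∨ Rch χ 2 g v)
    (hRG : ∀ v, Rch χ 1 q v ∨ Rch χ 2 g v)
    (hB : ∃ x, ¬ Rch χ 0 p x) (hR : ∃ x, ¬ Rch χ 1 q x) (hG : ∃ x, ¬ Rch χ 2 g x) :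
    (∃ W X Y Z : Finset V,
      X.Nonempty ∧ Y.Nonempty ∧ Z.Nonempty ∧
      Disjoint W X ∧ Disjoint W Y ∧ Disjoint W Z ∧
      Disjoint X Y ∧ Disjoint X Z ∧ Disjoint Y Z ∧
      W ∪ X ∪ Y ∪ Z = Finset.univ ∧
      ((KGraph χ 0).induce (↑(W ∪ X ∪ Y) : Set V)).Connected ∧
      ((KGraph χ 1).induce (↑(W ∪ X ∪ Z) : Set V)).Connected ∧
      ((KGraph χ 2).induce (↑(W ∪ Y ∪ Z) : Set V)).Connected ∧
      (∀ x ∈ X, ∀ y ∈ Y, χ s(x, y) = ({0} : Finset (Fin 3))) ∧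
      (∀ x ∈ X, ∀ z ∈ Z, χ s(x, z) = ({1} : Finset (Fin 3))) ∧
      (∀ y ∈ Y, ∀ z ∈ Z, χ s(y, z) = ({2} : Finset (Fin 3))) ∧
      (∀ w ∈ W, ∀ x ∈ X, (2 : Fin 3) ∉ χ s(w, x)) ∧
      (∀ w ∈ W, ∀ y ∈ Y, (1 : Fin 3) ∉ χ s(w, y)) ∧
      (∀ w ∈ W, ∀ z ∈ Z, (0 : Fin 3) ∉ χ s(w, z))) := by
  classical
  refine ⟨Finset.univ.filter (fun v => Rch χ 0 p v ∧ Rch χ 1 q v ∧ Rch χ 2 g v),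
    Finset.univ.filter (fun v => ¬ Rch χ 2 g v),
    Finset.univ.filter (fun v => ¬ Rch χ 1 q v),
    Finset.univ.filter (fun v => ¬ Rch χ 0 p v), ?_⟩
  have hWm : ∀ v : V, v ∈ Finset.univ.filter
      (fun v => Rch χ 0 p v ∧ Rch χ 1 q v ∧ Rch χ 2 g v) ↔
      (Rch χ 0 p v ∧ Rch χ 1 q v ∧ Rch χ 2 g v) := by
    intro v; simp [Finset.mem_filter]
  have hXm : ∀ v : V, v ∈ Finset.univ.filter (fun v => ¬ Rch χ 2 g v) ↔ ¬ Rch χ 2 g v := by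
    intro v; simp [Finset.mem_filter]
  have hYm : ∀ v : V, v ∈ Finset.univ.filter (fun v => ¬ Rch χ 1 q v) ↔ ¬ Rch χ 1 q v := by
    intro v; simp [Finset.mem_filter]
  have hZm : ∀ v : V, v ∈ Finset.univ.filter (fun v => ¬ Rch χ 0 p v) ↔ ¬ Rch χ 0 p v := by
    intro v; simp [Finset.mem_filter]
  obtain ⟨xg, hxg⟩ := hG
  obtain ⟨xq, hxq⟩ := hR
  obtain ⟨xp, hxp⟩ := hB
  refine ⟨⟨xg, (hXm xg).2 hxg⟩, ⟨xq, (hYm xq).2 hxq⟩, ⟨xp, (hZm xp).2 hxp⟩, ?_, ?_, ?_, ?_, ?_, ?_,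
    ?_, ?_, ?_, ?_, ?_, ?_, ?_, ?_, ?_, ?_⟩
  · exact Finset.disjoint_left.mpr (fun {v} hv hv' => ((hXm v).1 hv') ((hWm v).1 hv).2.2)
  · exact Finset.disjoint_left.mpr (fun {v} hv hv' => ((hYm v).1 hv') ((hWm v).1 hv).2.1)
  · exact Finset.disjoint_left.mpr (fun {v} hv hv' => ((hZm v).1 hv') ((hWm v).1 hv).1)
  · exact Finset.disjoint_left.mpr (fun {v} hv hv' =>
      ((hYm v).1 hv') ((hRG v).resolve_right ((hXm v).1 hv)))
  · exact Finset.disjoint_left.mpr (fun {v} hv hv' =>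
      ((hZm v).1 hv') ((hBG v).resolve_right ((hXm v).1 hv)))
  · exact Finset.disjoint_left.mpr (fun {v} hv hv' =>
      ((hZm v).1 hv') ((hBR v).resolve_right ((hYm v).1 hv)))
  · -- union is univ
    refine Finset.eq_univ_iff_forall.mpr (fun v => ?_)
    simp only [Finset.mem_union]
    by_cases h2 : Rch χ 2 g v
    · by_cases h1 : Rch χ 1 q v
      · by_cases h0 : Rch χ 0 p v
        · exact Or.inl (Or.inl (Or.inl ((hWm v).2 ⟨h0, h1, h2⟩)))
        · exact Or.inr ((hZm v).2 h0)
      · exact Or.inl (Or.inr ((hYm v).2 h1))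
    · exact Or.inl (Or.inl (Or.inr ((hXm v).2 h2)))
  · -- blue connectivity on W ∪ X ∪ Y
    have hset : (↑(Finset.univ.filter (fun v => Rch χ 0 p v ∧ Rch χ 1 q v ∧ Rch χ 2 g v) ∪
        Finset.univ.filter (fun v => ¬ Rch χ 2 g v) ∪
        Finset.univ.filter (fun v => ¬ Rch χ 1 q v)) : Set V) =
        {u | (KGraph χ 0).Reachable p u} := by
      ext v
      simp only [Finset.coe_union, Set.mem_union, Finset.mem_coe, hWm, hXm, hYm, Set.mem_setOf_eq]
      constructor
      · rintro ((h | h) | h)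
        · exact h.1
        · exact (hBG v).resolve_right h
        · exact (hBR v).resolve_right h
      · intro h0
        by_cases h2 : Rch χ 2 g v
        · by_cases h1 : Rch χ 1 q v
          · exact Or.inl (Or.inl ⟨h0, h1, h2⟩)
          · exact Or.inr h1
        · exact Or.inl (Or.inr h2)
    rw [hset]
    exact induce_reach_connected _ p
  · -- red connectivity on W ∪ X ∪ Z
    have hset : (↑(Finset.univ.filter (fun v => Rch χ 0 p v ∧ Rch χ 1 q v ∧ Rch χ 2 g v) ∪
        Finset.univ.filter (fun v => ¬ Rch χ 2 g v) ∪
        Finset.univ.filter (fun v => ¬ Rch χ 0 p v)) : Set V) =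
        {u | (KGraph χ 1).Reachable q u} := by
      ext v
      simp only [Finset.coe_union, Set.mem_union, Finset.mem_coe, hWm, hXm, hZm, Set.mem_setOf_eq]
      constructor
      · rintro ((h | h) | h)
        · exact h.2.1
        · exact (hRG v).resolve_right h
        · exact (hBR v).resolve_left h
      · intro h1
        by_cases h2 : Rch χ 2 g v
        · by_cases h0 : Rch χ 0 p v
          · exact Or.inl (Or.inl ⟨h0, h1, h2⟩)
          · exact Or.inr h0
        · exact Or.inl (Or.inr h2)
    rw [hset]
    exact induce_reach_connected _ q
  · -- green connectivity on W ∪ Y ∪ Z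
    have hset : (↑(Finset.univ.filter (fun v => Rch χ 0 p v ∧ Rch χ 1 q v ∧ Rch χ 2 g v) ∪
        Finset.univ.filter (fun v => ¬ Rch χ 1 q v) ∪
        Finset.univ.filter (fun v => ¬ Rch χ 0 p v)) : Set V) =
        {u | (KGraph χ 2).Reachable g u} := by
      ext v
      simp only [Finset.coe_union, Set.mem_union, Finset.mem_coe, hWm, hYm, hZm, Set.mem_setOf_eq]
      constructor
      · rintro ((h | h) | h)
        · exact h.2.2
        · exact (hRG v).resolve_left h
        · exact (hBG v).resolve_left h
      · intro h2
        by_cases h1 : Rch χ 1 q v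
        · by_cases h0 : Rch χ 0 p v
          · exact Or.inl (Or.inl ⟨h0, h1, h2⟩)
          · exact Or.inr h0
        · exact Or.inl (Or.inr h1)
    rw [hset]
    exact induce_reach_connected _ g
  · -- X-Y edges are exactly blue
    intro x hx y hy
    have hx2 := (hXm x).1 hx
    have hy1 := (hYm y).1 hy
    have hx1 : Rch χ 1 q x := (hRG x).resolve_right hx2
    have hy2 : Rch χ 2 g y := (hRG y).resolve_left hy1
    refine chi_eq_third χ hne (c := 1) (c' := 2) (c'' := 0) (by decide) ?_ ?_
    · exact fun h => hy1 (hx1.trans h)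
    · exact fun h => hx2 (hy2.trans h.symm)
  · -- X-Z edges are exactly red
    intro x hx z hz
    have hx2 := (hXm x).1 hx
    have hz0 := (hZm z).1 hz
    have hx0 : Rch χ 0 p x := (hBG x).resolve_right hx2
    have hz2 : Rch χ 2 g z := (hBG z).resolve_left hz0
    refine chi_eq_third χ hne (c := 0) (c' := 2) (c'' := 1) (by decide) ?_ ?_
    · exact fun h => hz0 (hx0.trans h)
    · exact fun h => hx2 (hz2.trans h.symm)
  · -- Y-Z edges are exactly green
    intro y hy z hz
    have hy1 := (hYm y).1 hy
    have hz0 := (hZm z).1 hz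
    have hy0 : Rch χ 0 p y := (hBR y).resolve_right hy1
    have hz1 : Rch χ 1 q z := (hBR z).resolve_left hz0
    refine chi_eq_third χ hne (c := 0) (c' := 1) (c'' := 2) (by decide) ?_ ?_
    · exact fun h => hz0 (hy0.trans h)
    · exact fun h => hy1 (hz1.trans h.symm)
  · -- W-X edges avoid green
    intro w hw x hx h
    exact ((hXm x).1 hx) (((hWm w).1 hw).2.2.trans (reach_of_mem χ h))
  · -- W-Y edges avoid red
    intro w hw y hy h
    exact ((hYm y).1 hy) (((hWm w).1 hw).2.1.trans (reach_of_mem χ h))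
  · -- W-Z edges avoid blue
    intro w hw z hz h
    exact ((hZm z).1 hz) (((hWm w).1 hw).1.trans (reach_of_mem χ h))

open StmtAux in
/-- Lemma 3 (3-coloring lemma): for every 3-multicoloring of the edges of a complete graph
(blue = 0, red = 1, green = 2), one of the alternatives (L1), (L2), (L3) holds. -/
theorem stmt2 {V : Type u} [Fintype V] [DecidableEq V] [Nonempty V]
    (χ : Sym2 V → Finset (Fin 3))
    (hne : ∀ x y : V, x ≠ y → (χ s(x, y)).Nonempty) :
    -- (L1): some color has a spanning connected component
    (∃ c : Fin 3, (KGraph χ c).Connected) ∨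
    -- (L2)
    (∃ W X Y Z : Finset V,
      W.Nonempty ∧ X.Nonempty ∧ Y.Nonempty ∧ Z.Nonempty ∧
      Disjoint W X ∧ Disjoint W Y ∧ Disjoint W Z ∧
      Disjoint X Y ∧ Disjoint X Z ∧ Disjoint Y Z ∧
      W ∪ X ∪ Y ∪ Z = Finset.univ ∧
      (∀ w ∈ W, ∀ x ∈ X, χ s(w, x) = ({0} : Finset (Fin 3))) ∧
      (∀ y ∈ Y, ∀ z ∈ Z, χ s(y, z) = ({0} : Finset (Fin 3))) ∧
      (∀ w ∈ W, ∀ y ∈ Y, χ s(w, y) = ({1} : Finset (Fin 3))) ∧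
      (∀ x ∈ X, ∀ z ∈ Z, χ s(x, z) = ({1} : Finset (Fin 3))) ∧
      (∀ w ∈ W, ∀ z ∈ Z, χ s(w, z) = ({2} : Finset (Fin 3))) ∧
      (∀ x ∈ X, ∀ y ∈ Y, χ s(x, y) = ({2} : Finset (Fin 3)))) ∨
    -- (L3)
    (∃ W X Y Z : Finset V,
      X.Nonempty ∧ Y.Nonempty ∧ Z.Nonempty ∧
      Disjoint W X ∧ Disjoint W Y ∧ Disjoint W Z ∧
      Disjoint X Y ∧ Disjoint X Z ∧ Disjoint Y Z ∧
      W ∪ X ∪ Y ∪ Z = Finset.univ ∧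
      ((KGraph χ 0).induce (↑(W ∪ X ∪ Y) : Set V)).Connected ∧
      ((KGraph χ 1).induce (↑(W ∪ X ∪ Z) : Set V)).Connected ∧
      ((KGraph χ 2).induce (↑(W ∪ Y ∪ Z) : Set V)).Connected ∧
      (∀ x ∈ X, ∀ y ∈ Y, χ s(x, y) = ({0} : Finset (Fin 3))) ∧
      (∀ x ∈ X, ∀ z ∈ Z, χ s(x, z) = ({1} : Finset (Fin 3))) ∧
      (∀ y ∈ Y, ∀ z ∈ Z, χ s(y, z) = ({2} : Finset (Fin 3))) ∧
      (∀ w ∈ W, ∀ x ∈ X, (2 : Fin 3) ∉ χ s(w, x)) ∧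
      (∀ w ∈ W, ∀ y ∈ Y, (1 : Fin 3) ∉ χ s(w, y)) ∧
      (∀ w ∈ W, ∀ z ∈ Z, (0 : Fin 3) ∉ χ s(w, z))) := by
  classical
  by_cases h0 : (KGraph χ 0).Connected
  · exact Or.inl ⟨0, h0⟩
  by_cases h1 : (KGraph χ 1).Connected
  · exact Or.inl ⟨1, h1⟩
  by_cases h2 : (KGraph χ 2).Connected
  · exact Or.inl ⟨2, h2⟩
  have hd0 := not_conn χ h0
  have hd1 := not_conn χ h1
  have hd2 := not_conn χ h2
  by_cases hcov : (∃ p q : V, ∀ v, Rch χ 0 p v ∨ Rch χ 1 q v) ∨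
      (∃ p q : V, ∀ v, Rch χ 1 p v ∨ Rch χ 2 q v) ∨
      (∃ p q : V, ∀ v, Rch χ 0 p v ∨ Rch χ 2 q v)
  · -- (L3) route
    refine Or.inr (Or.inr ?_)
    rcases hcov with ⟨p, q, hc⟩ | ⟨p, q, hc⟩ | ⟨p, q, hc⟩
    · obtain ⟨g, hBG, hRG⟩ := cover_extend χ hne (c := 0) (c' := 1) (c'' := 2) (by decide) hc
        (proper_of_exists χ hd0 p) (proper_of_exists χ hd1 q)
      exact L3build χ hne p q g hc hBG hRG (proper_of_exists χ hd0 p)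
        (proper_of_exists χ hd1 q) (proper_of_exists χ hd2 g)
    · obtain ⟨g, hRB, hGB⟩ := cover_extend χ hne (c := 1) (c' := 2) (c'' := 0) (by decide) hc
        (proper_of_exists χ hd1 p) (proper_of_exists χ hd2 q)
      exact L3build χ hne g p q (fun v => (hRB v).symm) (fun v => (hGB v).symm) hc
        (proper_of_exists χ hd0 g) (proper_of_exists χ hd1 p) (proper_of_exists χ hd2 q)
    · obtain ⟨g, hBR, hGR⟩ := cover_extend χ hne (c := 0) (c' := 2) (c'' := 1) (by decide) hc
        (proper_of_exists χ hd0 p) (proper_of_exists χ hd2 q)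
      exact L3build χ hne p g q hBR hc (fun v => (hGR v).symm)
        (proper_of_exists χ hd0 p) (proper_of_exists χ hd1 g) (proper_of_exists χ hd2 q)
  · -- (L2) route
    push_neg at hcov
    obtain ⟨hn01, hn12, hn02⟩ := hcov
    refine Or.inr (Or.inl ?_)
    obtain ⟨a⟩ := (inferInstance : Nonempty V)
    -- cross-component lemma for green
    have share : ∀ u v : V, Rch χ 2 a u → ¬ Rch χ 2 a v → (Rch χ 0 u v ∨ Rch χ 1 u v) := by
      intro u v hu hv
      by_contra h
      push_neg at h
      exact hv (hu.trans (reach_third χ hne (c := 0) (c' := 1) (c'' := 2) (by decide) h.1 h.2))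
    -- the vertex b : same blue component as a, different red and green components
    obtain ⟨b, hab1, hab2⟩ := hn12 a a
    have hab0 : Rch χ 0 a b :=
      (share a b (SimpleGraph.Reachable.refl a) hab2).resolve_right hab1
    -- the vertex c : same red component as a, different blue and green components
    obtain ⟨c, hac0, hac2⟩ := hn02 a a
    have hac1 : Rch χ 1 a c :=
      (share a c (SimpleGraph.Reachable.refl a) hac2).resolve_left hac0
    -- the vertex z : different blue and red components from a, same green
    obtain ⟨z, haz0, haz1⟩ := hn01 a a
    have haz2 : Rch χ 2 a z :=
      reach_third χ hne (c := 0) (c' := 1) (c'' := 2) (by decide) haz0 haz1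
    have hbc0 : ¬ Rch χ 0 b c := fun h => hac0 (hab0.trans h)
    have hbc1 : ¬ Rch χ 1 b c := fun h => hab1 (hac1.trans h.symm)
    have hbz1 : Rch χ 1 b z := by
      rcases share z b haz2 hab2 with h | h
      · exact absurd (hab0.trans h.symm) (fun hh => haz0 hh)
      · exact h.symm
    have hcz0 : Rch χ 0 c z := by
      rcases share z c haz2 hac2 with h | h
      · exact h.symm
      · exact absurd (hac1.trans h.symm) (fun hh => haz1 hh)
    -- green membership facts
    have hWg : ∀ v, Rch χ 0 a v → Rch χ 1 a v → Rch χ 2 a v := by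
      intro v hv0 hv1
      have hvz : Rch χ 2 v z := by
        refine reach_third χ hne (c := 0) (c' := 1) (c'' := 2) (by decide) ?_ ?_
        · exact fun h => haz0 (hv0.trans h)
        · exact fun h => haz1 (hv1.trans h)
      exact haz2.trans hvz.symm
    have hZg : ∀ v, Rch χ 0 c v → Rch χ 1 b v →
        ¬ Rch χ 0 a v ∧ ¬ Rch χ 1 a v ∧ Rch χ 2 a v := by
      intro v hv0 hv1
      have h0 : ¬ Rch χ 0 a v := fun h => hac0 (h.trans hv0.symm)
      have h1 : ¬ Rch χ 1 a v := fun h => hab1 (h.trans hv1.symm)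
      exact ⟨h0, h1, reach_third χ hne (c := 0) (c' := 1) (c'' := 2) (by decide) h0 h1⟩
    have hXg : ∀ v, Rch χ 0 a v → Rch χ 1 b v → ¬ Rch χ 2 a v := by
      intro v hv0 hv1
      have hvc : Rch χ 2 v c := by
        refine reach_third χ hne (c := 0) (c' := 1) (c'' := 2) (by decide) ?_ ?_
        · exact fun h => hac0 (hv0.trans h)
        · exact fun h => hbc1 (hv1.trans h)
      exact fun h => hac2 (h.trans hvc)
    have hYg : ∀ v, Rch χ 0 c v → Rch χ 1 a v → ¬ Rch χ 2 a v := by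
      intro v hv0 hv1
      have hvb : Rch χ 2 v b := by
        refine reach_third χ hne (c := 0) (c' := 1) (c'' := 2) (by decide) ?_ ?_
        · exact fun h => hbc0 ((hv0.trans h).symm)
        · exact fun h => hab1 (hv1.trans h)
      exact fun h => hab2 (h.trans hvb)
    refine ⟨Finset.univ.filter (fun v => Rch χ 0 a v ∧ Rch χ 1 a v),
      Finset.univ.filter (fun v => Rch χ 0 a v ∧ Rch χ 1 b v),
      Finset.univ.filter (fun v => Rch χ 0 c v ∧ Rch χ 1 a v),
      Finset.univ.filter (fun v => Rch χ 0 c v ∧ Rch χ 1 b v), ?_⟩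
    have hWm : ∀ v : V, v ∈ Finset.univ.filter (fun v => Rch χ 0 a v ∧ Rch χ 1 a v) ↔
        (Rch χ 0 a v ∧ Rch χ 1 a v) := by intro v; simp [Finset.mem_filter]
    have hXm : ∀ v : V, v ∈ Finset.univ.filter (fun v => Rch χ 0 a v ∧ Rch χ 1 b v) ↔
        (Rch χ 0 a v ∧ Rch χ 1 b v) := by intro v; simp [Finset.mem_filter]
    have hYm : ∀ v : V, v ∈ Finset.univ.filter (fun v => Rch χ 0 c v ∧ Rch χ 1 a v) ↔
        (Rch χ 0 c v ∧ Rch χ 1 a v) := by intro v; simp [Finset.mem_filter]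
    have hZm : ∀ v : V, v ∈ Finset.univ.filter (fun v => Rch χ 0 c v ∧ Rch χ 1 b v) ↔
        (Rch χ 0 c v ∧ Rch χ 1 b v) := by intro v; simp [Finset.mem_filter]
    refine ⟨⟨a, (hWm a).2 ⟨.refl a, .refl a⟩⟩,
      ⟨b, (hXm b).2 ⟨hab0, .refl b⟩⟩,
      ⟨c, (hYm c).2 ⟨.refl c, hac1⟩⟩,
      ⟨z, (hZm z).2 ⟨hcz0, hbz1⟩⟩, ?_, ?_, ?_, ?_, ?_, ?_, ?_, ?_, ?_, ?_, ?_, ?_, ?_⟩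
    · exact Finset.disjoint_left.mpr (fun {v} hv hv' =>
        hab1 (((hWm v).1 hv).2.trans (((hXm v).1 hv').2).symm))
    · exact Finset.disjoint_left.mpr (fun {v} hv hv' =>
        hac0 (((hWm v).1 hv).1.trans (((hYm v).1 hv').1).symm))
    · exact Finset.disjoint_left.mpr (fun {v} hv hv' =>
        hab1 (((hWm v).1 hv).2.trans (((hZm v).1 hv').2).symm))
    · exact Finset.disjoint_left.mpr (fun {v} hv hv' =>
        hac0 (((hXm v).1 hv).1.trans (((hYm v).1 hv').1).symm))
    · exact Finset.disjoint_left.mpr (fun {v} hv hv' =>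
        hac0 (((hXm v).1 hv).1.trans (((hZm v).1 hv').1).symm))
    · exact Finset.disjoint_left.mpr (fun {v} hv hv' =>
        hab1 (((hYm v).1 hv).2.trans (((hZm v).1 hv').2).symm))
    · -- union = univ
      refine Finset.eq_univ_iff_forall.mpr (fun v => ?_)
      simp only [Finset.mem_union]
      by_cases hv : Rch χ 2 a v
      · rcases share v b hv hab2 with h | h
        · rcases share v c hv hac2 with h' | h'
          · exact absurd ((hab0.trans h.symm).trans h') hac0
          · exact Or.inl (Or.inl (Or.inl ((hWm v).2 ⟨hab0.trans h.symm, hac1.trans h'.symm⟩)))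
        · rcases share v c hv hac2 with h' | h'
          · exact Or.inr ((hZm v).2 ⟨h'.symm, h.symm⟩)
          · exact absurd ((hac1.trans h'.symm).trans h) hab1
      · rcases share a v (SimpleGraph.Reachable.refl a) hv with h | h
        · rcases share z v haz2 hv with h' | h'
          · exact absurd (h.trans (hcz0.trans h').symm) hac0
          · exact Or.inl (Or.inl (Or.inr ((hXm v).2 ⟨h, hbz1.trans h'⟩)))
        · rcases share z v haz2 hv with h' | h'
          · exact Or.inl (Or.inr ((hYm v).2 ⟨hcz0.trans h', h⟩))
          · exact absurd (h.trans (hbz1.trans h').symm) hab1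
    · -- W-X exactly blue
      intro w hw x hx
      obtain ⟨hw0, hw1⟩ := (hWm w).1 hw
      obtain ⟨hx0, hx1⟩ := (hXm x).1 hx
      refine chi_eq_third χ hne (c := 1) (c' := 2) (c'' := 0) (by decide) ?_ ?_
      · exact fun h => hab1 ((hw1.trans h).trans hx1.symm)
      · exact fun h => hXg x hx0 hx1 ((hWg w hw0 hw1).trans h)
    · -- Y-Z exactly blue
      intro y hy z' hz'
      obtain ⟨hy0, hy1⟩ := (hYm y).1 hy
      obtain ⟨hz0, hz1⟩ := (hZm z').1 hz'
      refine chi_eq_third χ hne (c := 1) (c' := 2) (c'' := 0) (by decide) ?_ ?_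
      · exact fun h => hab1 ((hy1.trans h).trans hz1.symm)
      · exact fun h => hYg y hy0 hy1 ((hZg z' hz0 hz1).2.2.trans h.symm)
    · -- W-Y exactly red
      intro w hw y hy
      obtain ⟨hw0, hw1⟩ := (hWm w).1 hw
      obtain ⟨hy0, hy1⟩ := (hYm y).1 hy
      refine chi_eq_third χ hne (c := 0) (c' := 2) (c'' := 1) (by decide) ?_ ?_
      · exact fun h => hac0 ((hw0.trans h).trans hy0.symm)
      · exact fun h => hYg y hy0 hy1 ((hWg w hw0 hw1).trans h)
    · -- X-Z exactly red
      intro x hx z' hz'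
      obtain ⟨hx0, hx1⟩ := (hXm x).1 hx
      obtain ⟨hz0, hz1⟩ := (hZm z').1 hz'
      refine chi_eq_third χ hne (c := 0) (c' := 2) (c'' := 1) (by decide) ?_ ?_
      · exact fun h => hac0 ((hx0.trans h).trans hz0.symm)
      · exact fun h => hXg x hx0 hx1 ((hZg z' hz0 hz1).2.2.trans h.symm)
    · -- W-Z exactly green
      intro w hw z' hz'
      obtain ⟨hw0, hw1⟩ := (hWm w).1 hw
      obtain ⟨hz0, hz1⟩ := (hZm z').1 hz'
      refine chi_eq_third χ hne (c := 0) (c' := 1) (c'' := 2) (by decide) ?_ ?_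
      · exact fun h => hac0 ((hw0.trans h).trans hz0.symm)
      · exact fun h => hab1 ((hw1.trans h).trans hz1.symm)
    · -- X-Y exactly green
      intro x hx y hy
      obtain ⟨hx0, hx1⟩ := (hXm x).1 hx
      obtain ⟨hy0, hy1⟩ := (hYm y).1 hy
      refine chi_eq_third χ hne (c := 0) (c' := 1) (c'' := 2) (by decide) ?_ ?_
      · exact fun h => hac0 ((hx0.trans h).trans hy0.symm)
      · exact fun h => hab1 ((hy1.trans h.symm).trans hx1.symm)
end

section
/- For every 3-uniform hypergraph H on n vertices in which every pair of distinct vertices is contained in at least one edge, mc_3(H) ≥ n − 2·α*_3(H). -/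
set_option linter.unusedSectionVars false


universe u

/-- `E` is the edge set of a `k`-uniform hypergraph on vertex set `V`. -/
def Uniform {V : Type u} (k : ℕ) (E : Finset (Finset V)) : Prop :=
  ∀ e ∈ E, e.card = k

/-- There is a `k`-partite hole of size `a`: pairwise disjoint sets `X 0, …, X (k-1)`,
each of size `a`, such that no edge intersects all of them. -/
def HasHole {V : Type u} (k : ℕ) (E : Finset (Finset V)) (a : ℕ) : Prop :=
  ∃ X : Fin k → Finset V,
    (∀ i, (X i).card = a) ∧
    (∀ i j, i ≠ j → Disjoint (X i) (X j)) ∧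
    ∀ e ∈ E, ∃ i, ∀ v ∈ e, v ∉ X i

/-- The `k`-partite-hole number `α*_k`: the largest size of a `k`-partite hole. -/
noncomputable def holeNumber {V : Type u} (k : ℕ) (E : Finset (Finset V)) : ℕ :=
  sSup {a | HasHole k E a}

/-- The shadow graph of the color class `c` of the edge-coloring `χ`. -/
def colorGraph {V : Type u} {r : ℕ} (E : Finset (Finset V)) (χ : Finset V → Fin r)
    (c : Fin r) : SimpleGraph V where
  Adj x y := x ≠ y ∧ ∃ e ∈ E, χ e = c ∧ x ∈ e ∧ y ∈ e
  symm := by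
    constructor
    rintro x y ⟨hxy, e, he, hc, hx, hy⟩
    exact ⟨hxy.symm, e, he, hc, hy, hx⟩
  loopless := by
    constructor
    rintro x ⟨h, -⟩
    exact h rfl

/-- The largest order of a monochromatic component under the edge-coloring `χ`. -/
noncomputable def maxMonoComponent {V : Type u} (r : ℕ) (E : Finset (Finset V))
    (χ : Finset V → Fin r) : ℕ :=
  sSup {m | ∃ c : Fin r, ∃ K : (colorGraph E χ c).ConnectedComponent, m = K.supp.ncard}

/-- `mc r E`: the largest `m` such that every `r`-coloring of the edges of `E` yields a
monochromatic component of order at least `m` (equivalently, the minimum over all colorings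
of the largest order of a monochromatic component). -/
noncomputable def mc {V : Type u} (r : ℕ) (E : Finset (Finset V)) : ℕ :=
  sInf {m | ∃ χ : Finset V → Fin r, m = maxMonoComponent r E χ}

section Aux

variable {V : Type u} [Fintype V]

/-- Support of the color-`c` component containing `v`. -/
def Psupp (E : Finset (Finset V)) (χ : Finset V → Fin 3) (c : Fin 3) (v : V) : Set V :=
  ((colorGraph E χ c).connectedComponentMk v).supp

variable {E : Finset (Finset V)} {χ : Finset V → Fin 3}

lemma mem_Psupp_self (c : Fin 3) (v : V) : v ∈ Psupp E χ c v :=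
  (SimpleGraph.ConnectedComponent.mem_supp_iff _ _).2 rfl

lemma Psupp_eq_of_mem {c : Fin 3} {v x : V} (hx : x ∈ Psupp E χ c v) :
    Psupp E χ c x = Psupp E χ c v := by
  have := (SimpleGraph.ConnectedComponent.mem_supp_iff _ _).1 hx
  unfold Psupp
  rw [this]

lemma mem_Psupp_of_edge {c : Fin 3} {v x y : V} (hx : x ∈ Psupp E χ c v)
    {e : Finset V} (he : e ∈ E) (hc : χ e = c) (hxe : x ∈ e) (hye : y ∈ e) :
    y ∈ Psupp E χ c v := by
  rcases eq_or_ne y x with rfl | hne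
  · exact hx
  · have hadj : (colorGraph E χ c).Adj y x := ⟨hne, e, he, hc, hye, hxe⟩
    have hmk := (SimpleGraph.ConnectedComponent.mem_supp_iff _ _).1 hx
    exact (SimpleGraph.ConnectedComponent.mem_supp_iff _ _).2
      ((SimpleGraph.ConnectedComponent.sound hadj.reachable).trans hmk)

lemma fin3_cases : ∀ (a c1 c2 c3 : Fin 3), c1 ≠ c2 → c1 ≠ c3 → c2 ≠ c3 →
    a = c1 ∨ a = c2 ∨ a = c3 := by decide

lemma bddAbove_hole : BddAbove {a | HasHole 3 E a} := by
  refine ⟨Fintype.card V, ?_⟩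
  rintro a ⟨X, hc, -, -⟩
  exact hc 0 ▸ Finset.card_le_univ (X 0)

lemma hole_ncard_le (Y : Fin 3 → Set V)
    (hd : ∀ i j, i ≠ j → Disjoint (Y i) (Y j))
    (hh : ∀ e ∈ E, ∃ i, ∀ v ∈ e, v ∉ Y i) :
    ∃ i, (Y i).ncard ≤ holeNumber 3 E := by
  classical
  set a := min (min ((Y 0).ncard) ((Y 1).ncard)) ((Y 2).ncard) with ha
  have hale : ∀ i : Fin 3, a ≤ (Y i).ncard := by
    intro i
    rcases fin3_cases i 0 1 2 (by decide) (by decide) (by decide) with h | h | h <;>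
      subst h <;> omega
  have hsub : ∀ i : Fin 3, ∃ t : Finset V, (∀ v ∈ t, v ∈ Y i) ∧ t.card = a := by
    intro i
    obtain ⟨t, hts, htc⟩ := Finset.exists_subset_card_eq
      (s := (Y i).toFinite.toFinset) (n := a)
      (by rw [← Set.ncard_eq_toFinset_card (Y i)]; exact hale i)
    exact ⟨t, fun v hv => ((Y i).toFinite.mem_toFinset).1 (hts hv), htc⟩
  choose X hX1 hX2 using hsub
  have hhole : HasHole 3 E a := by
    refine ⟨X, hX2, ?_, ?_⟩
    · intro i j hij
      rw [Finset.disjoint_left]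
      intro v hv hvj
      exact Set.disjoint_left.1 (hd i j hij) (hX1 i v hv) (hX1 j v hvj)
    · intro e he
      obtain ⟨i, hi⟩ := hh e he
      exact ⟨i, fun v hv hvX => hi v hv (hX1 i v hvX)⟩
  have hle : a ≤ holeNumber 3 E := le_csSup bddAbove_hole hhole
  have : a = (Y 0).ncard ∨ a = (Y 1).ncard ∨ a = (Y 2).ncard := by omega
  rcases this with h | h | h
  · exact ⟨0, h ▸ hle⟩
  · exact ⟨1, h ▸ hle⟩
  · exact ⟨2, h ▸ hle⟩

lemma le_maxMono (c : Fin 3) (v : V) :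
    (Psupp E χ c v).ncard ≤ maxMonoComponent 3 E χ := by
  apply le_csSup
  · refine ⟨Fintype.card V, ?_⟩
    rintro m ⟨c', K, rfl⟩
    calc K.supp.ncard ≤ (Set.univ : Set V).ncard :=
          Set.ncard_le_ncard (Set.subset_univ _) (Set.toFinite _)
      _ = Fintype.card V := by rw [Set.ncard_univ, Nat.card_eq_fintype_card]
  · exact ⟨c, _, rfl⟩

lemma count3 (A B C : Set V) (h : ∀ x, x ∈ A ∨ x ∈ B ∨ x ∈ C) :
    Fintype.card V ≤ A.ncard + B.ncard + C.ncard := by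
  have h1 : (Set.univ : Set V).ncard ≤ (A ∪ B ∪ C).ncard := by
    apply Set.ncard_le_ncard _ (Set.toFinite _)
    intro x _
    rcases h x with h | h | h
    · exact Or.inl (Or.inl h)
    · exact Or.inl (Or.inr h)
    · exact Or.inr h
  have h2 := Set.ncard_union_le (A ∪ B) C
  have h3 := Set.ncard_union_le A B
  have h4 : (Set.univ : Set V).ncard = Fintype.card V := by
    rw [Set.ncard_univ, Nat.card_eq_fintype_card]
  omega

lemma main_lemma (hδ : ∀ x y : V, x ≠ y → ∃ e ∈ E, x ∈ e ∧ y ∈ e)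
    (c1 c2 c3 : Fin 3) (h12 : c1 ≠ c2) (h13 : c1 ≠ c3) (h23 : c2 ≠ c3) (v : V)
    (hD : ((Psupp E χ c3 v) \ (Psupp E χ c1 v ∪ Psupp E χ c2 v)).ncard ≤ holeNumber 3 E) :
    Fintype.card V - 2 * holeNumber 3 E ≤ maxMonoComponent 3 E χ := by
  classical
  obtain ⟨α, hα⟩ : ∃ a, a = holeNumber 3 E := ⟨_, rfl⟩
  rw [← hα] at hD ⊢
  set P1 := Psupp E χ c1 v with hP1
  set P2 := Psupp E χ c2 v with hP2
  set P3 := Psupp E χ c3 v with hP3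
  -- covering of V by the three components of v
  have hcover : ∀ x : V, x ∈ P1 ∨ x ∈ P2 ∨ x ∈ P3 := by
    intro x
    rcases eq_or_ne x v with rfl | hxv
    · exact Or.inl (mem_Psupp_self c1 x)
    · obtain ⟨e, he, hxe, hve⟩ := hδ x v hxv
      rcases fin3_cases (χ e) c1 c2 c3 h12 h13 h23 with hc | hc | hc
      · exact Or.inl (mem_Psupp_of_edge (mem_Psupp_self c1 v) he hc hve hxe)
      · exact Or.inr (Or.inl (mem_Psupp_of_edge (mem_Psupp_self c2 v) he hc hve hxe))
      · exact Or.inr (Or.inr (mem_Psupp_of_edge (mem_Psupp_self c3 v) he hc hve hxe))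
  set T : Set V := Set.univ \ (P1 ∪ P2) with hT
  have hTle : T.ncard ≤ α := by
    refine le_trans (Set.ncard_le_ncard ?_ (Set.toFinite _)) hD
    intro x hx
    rcases hx with ⟨-, hx2⟩
    rcases hcover x with h | h | h
    · exact absurd (Or.inl h) hx2
    · exact absurd (Or.inr h) hx2
    · exact ⟨h, hx2⟩
  by_cases hU1 : (P1 \ P2).ncard ≤ α
  · -- P2 is large
    have hc3 := count3 P2 (P1 \ P2) T (by
      intro x
      by_cases h2 : x ∈ P2
      · exact Or.inl h2
      by_cases h1 : x ∈ P1
      · exact Or.inr (Or.inl ⟨h1, h2⟩)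
      · exact Or.inr (Or.inr ⟨Set.mem_univ x, fun h => h.elim h1 h2⟩))
    have hm := le_maxMono (E := E) (χ := χ) c2 v
    rw [← hP2] at hm
    omega
  by_cases hU2 : (P2 \ P1).ncard ≤ α
  · have hc3 := count3 P1 (P2 \ P1) T (by
      intro x
      by_cases h1 : x ∈ P1
      · exact Or.inl h1
      by_cases h2 : x ∈ P2
      · exact Or.inr (Or.inl ⟨h2, h1⟩)
      · exact Or.inr (Or.inr ⟨Set.mem_univ x, fun h => h.elim h1 h2⟩))
    have hm := le_maxMono (E := E) (χ := χ) c1 v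
    rw [← hP1] at hm
    omega
  -- both U1 and U2 have more than α elements; in particular nonempty
  obtain ⟨x0, hx0m⟩ : (P1 \ P2).Nonempty := Set.nonempty_of_ncard_ne_zero (by omega)
  obtain ⟨y0, hy0m⟩ : (P2 \ P1).Nonempty := Set.nonempty_of_ncard_ne_zero (by omega)
  set Q := Psupp E χ c3 x0 with hQ
  -- every pair (x ∈ U1, y ∈ U2) is joined by a c3-edge
  have hA : ∀ x ∈ P1 \ P2, ∀ y ∈ P2 \ P1, y ∈ Psupp E χ c3 x := by
    rintro x ⟨hx1, hx2⟩ y ⟨hy2, hy1⟩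
    have hxy : x ≠ y := fun h => hx2 (h ▸ hy2)
    obtain ⟨e, he, hxe, hye⟩ := hδ x y hxy
    rcases fin3_cases (χ e) c1 c2 c3 h12 h13 h23 with hc | hc | hc
    · exact absurd (mem_Psupp_of_edge hx1 he hc hxe hye) hy1
    · exact absurd (mem_Psupp_of_edge hy2 he hc hye hxe) hx2
    · exact mem_Psupp_of_edge (mem_Psupp_self c3 x) he hc hxe hye
  have hU1Q : ∀ x ∈ P1 \ P2, x ∈ Q := by
    intro x hx
    have h1 : y0 ∈ Psupp E χ c3 x := hA x hx y0 hy0m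
    have h2 : y0 ∈ Q := hA x0 hx0m y0 hy0m
    have : Psupp E χ c3 x = Q := by
      rw [← Psupp_eq_of_mem h1, hQ, ← Psupp_eq_of_mem h2]
    exact this ▸ mem_Psupp_self c3 x
  have hU2Q : ∀ y ∈ P2 \ P1, y ∈ Q := fun y hy => hA x0 hx0m y hy
  have hx0Q : x0 ∈ Q := mem_Psupp_self c3 x0
  -- the triple (S \ Q, U1, U2) is a hole
  have hhole := hole_ncard_le (E := E) ![(P1 ∩ P2) \ Q, P1 \ P2, P2 \ P1] ?_ ?_
  · rcases hhole with ⟨i, hi⟩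
    rcases fin3_cases i 0 1 2 (by decide) (by decide) (by decide) with h | h | h <;> subst h <;>
      simp only [Matrix.cons_val_zero, Matrix.cons_val_one, Matrix.head_cons,
        Matrix.cons_val_two, Matrix.tail_cons] at hi
    · -- |S \ Q| ≤ α : Q is large
      have hc3 := count3 Q ((P1 ∩ P2) \ Q) T (by
        intro x
        by_cases hq : x ∈ Q
        · exact Or.inl hq
        by_cases h1 : x ∈ P1 <;> by_cases h2 : x ∈ P2
        · exact Or.inr (Or.inl ⟨⟨h1, h2⟩, hq⟩)
        · exact absurd (hU1Q x ⟨h1, h2⟩) hq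
        · exact absurd (hU2Q x ⟨h2, h1⟩) hq
        · exact Or.inr (Or.inr ⟨Set.mem_univ x, fun h => h.elim h1 h2⟩))
      have hm := le_maxMono (E := E) (χ := χ) c3 x0
      rw [← hQ] at hm
      rw [← hα] at hi
      omega
    · rw [← hα] at hi; exact absurd hi hU1
    · rw [← hα] at hi; exact absurd hi hU2
  · -- disjointness
    have d01 : Disjoint ((P1 ∩ P2) \ Q) (P1 \ P2) :=
      Set.disjoint_left.2 fun x hx hx' => hx'.2 hx.1.2
    have d02 : Disjoint ((P1 ∩ P2) \ Q) (P2 \ P1) :=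
      Set.disjoint_left.2 fun x hx hx' => hx'.2 hx.1.1
    have d12 : Disjoint (P1 \ P2 : Set V) (P2 \ P1) :=
      Set.disjoint_left.2 fun x hx hx' => hx.2 hx'.1
    intro i j hij
    rcases fin3_cases i 0 1 2 (by decide) (by decide) (by decide) with h | h | h <;> subst h <;>
      rcases fin3_cases j 0 1 2 (by decide) (by decide) (by decide) with h | h | h <;> subst h <;>
      simp only [Matrix.cons_val_zero, Matrix.cons_val_one, Matrix.head_cons,
        Matrix.cons_val_two, Matrix.tail_cons] <;>
      first
        | exact absurd rfl hij
        | exact d01 | exact d02 | exact d12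
        | exact d01.symm | exact d02.symm | exact d12.symm
  · -- no edge meets all three
    intro e he
    by_contra hcon
    push_neg at hcon
    obtain ⟨s, hse, hs⟩ := hcon 0
    obtain ⟨x, hxe, hx⟩ := hcon 1
    obtain ⟨y, hye, hy⟩ := hcon 2
    simp only [Matrix.cons_val_zero, Matrix.cons_val_one, Matrix.head_cons,
      Matrix.cons_val_two, Matrix.tail_cons] at hs hx hy
    rcases fin3_cases (χ e) c1 c2 c3 h12 h13 h23 with hc | hc | hc
    · exact hy.2 (mem_Psupp_of_edge hx.1 he hc hxe hye)
    · exact hx.2 (mem_Psupp_of_edge hy.1 he hc hye hxe)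
    · have hxQ : x ∈ Q := hU1Q x hx
      exact hs.2 (mem_Psupp_of_edge hxQ he hc hxe hse)

lemma per_coloring (hδ : ∀ x y : V, x ≠ y → ∃ e ∈ E, x ∈ e ∧ y ∈ e) :
    Fintype.card V - 2 * holeNumber 3 E ≤ maxMonoComponent 3 E χ := by
  classical
  rcases isEmpty_or_nonempty V with hV | hV
  · simp [Fintype.card_eq_zero]
  obtain ⟨v⟩ := hV
  set P : Fin 3 → Set V := fun c => Psupp E χ c v with hP
  have hhole := hole_ncard_le (E := E)
    ![P 0 \ (P 1 ∪ P 2), P 1 \ (P 0 ∪ P 2), P 2 \ (P 0 ∪ P 1)] ?_ ?_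
  · rcases hhole with ⟨i, hi⟩
    rcases fin3_cases i 0 1 2 (by decide) (by decide) (by decide) with h | h | h <;> subst h <;>
      simp only [Matrix.cons_val_zero, Matrix.cons_val_one, Matrix.head_cons,
        Matrix.cons_val_two, Matrix.tail_cons] at hi
    · exact main_lemma hδ 1 2 0 (by decide) (by decide) (by decide) v hi
    · exact main_lemma hδ 0 2 1 (by decide) (by decide) (by decide) v hi
    · exact main_lemma hδ 0 1 2 (by decide) (by decide) (by decide) v hi
  · have d01 : Disjoint (P 0 \ (P 1 ∪ P 2)) (P 1 \ (P 0 ∪ P 2)) :=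
      Set.disjoint_left.2 fun x hx hy => hx.2 (Or.inl hy.1)
    have d02 : Disjoint (P 0 \ (P 1 ∪ P 2)) (P 2 \ (P 0 ∪ P 1)) :=
      Set.disjoint_left.2 fun x hx hy => hx.2 (Or.inr hy.1)
    have d12 : Disjoint (P 1 \ (P 0 ∪ P 2)) (P 2 \ (P 0 ∪ P 1)) :=
      Set.disjoint_left.2 fun x hx hy => hx.2 (Or.inr hy.1)
    intro i j hij
    rcases fin3_cases i 0 1 2 (by decide) (by decide) (by decide) with h | h | h <;> subst h <;>
      rcases fin3_cases j 0 1 2 (by decide) (by decide) (by decide) with h | h | h <;> subst h <;>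
      simp only [Matrix.cons_val_zero, Matrix.cons_val_one, Matrix.head_cons,
        Matrix.cons_val_two, Matrix.tail_cons] <;>
      first
        | exact absurd rfl hij
        | exact d01 | exact d02 | exact d12
        | exact d01.symm | exact d02.symm | exact d12.symm
  · intro e he
    by_contra hcon
    push_neg at hcon
    obtain ⟨x, hxe, hx⟩ := hcon 0
    obtain ⟨y, hye, hy⟩ := hcon 1
    obtain ⟨z, hze, hz⟩ := hcon 2
    simp only [Matrix.cons_val_zero, Matrix.cons_val_one, Matrix.head_cons,
      Matrix.cons_val_two, Matrix.tail_cons] at hx hy hz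
    rcases fin3_cases (χ e) 0 1 2 (by decide) (by decide) (by decide) with hc | hc | hc
    · exact hy.2 (Or.inl (mem_Psupp_of_edge hx.1 he hc hxe hye))
    · exact hz.2 (Or.inr (mem_Psupp_of_edge hy.1 he hc hye hze))
    · exact hx.2 (Or.inr (mem_Psupp_of_edge hz.1 he hc hze hxe))

end Aux

/-- For every 3-uniform hypergraph `H` on `n` vertices in which every pair of distinct
vertices is contained in at least one edge, `mc_3(H) ≥ n − 2·α*_3(H)`. -/
theorem stmt4 {V : Type u} [Fintype V]
    (E : Finset (Finset V)) (hU : Uniform 3 E)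
    (hδ : ∀ x y : V, x ≠ y → ∃ e ∈ E, x ∈ e ∧ y ∈ e) :
    Fintype.card V - 2 * holeNumber 3 E ≤ mc 3 E := by
  apply le_csInf
  · exact ⟨maxMonoComponent 3 E (fun _ => 0), fun _ => 0, rfl⟩
  · rintro m ⟨χ, rfl⟩
    exact per_coloring hδ
end

section
/- For every Steiner triple system S on n vertices, mc_3(S) ≥ n − 2·α*_3(S). -/
universe u

/-- `E` is the edge set of a Steiner triple system on `V`: every edge has three vertices and
every pair of distinct vertices is contained in exactly one edge. -/
def IsSTS {V : Type u} (E : Finset (Finset V)) : Prop :=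
  (∀ e ∈ E, e.card = 3) ∧
  ∀ x y : V, x ≠ y → ∃! e, e ∈ E ∧ x ∈ e ∧ y ∈ e

section Aux

variable {V : Type u} [Fintype V]

lemma holeNumber_ge (E : Finset (Finset V)) (a : ℕ) (h : HasHole 3 E a) :
    a ≤ holeNumber 3 E := by
  classical
  show a ≤ sSup {a | HasHole 3 E a}
  refine le_csSup ?_ (show a ∈ {a | HasHole 3 E a} from h)
  refine ⟨Fintype.card V, ?_⟩
  rintro b ⟨X, hcard, -, -⟩
  rw [← hcard 0]
  exact (Finset.card_le_card (Finset.subset_univ _)).trans (by simp)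

lemma key (E : Finset (Finset V)) (hE : IsSTS E) (χ : Finset V → Fin 3) :
    Fintype.card V ≤ maxMonoComponent 3 E χ + 2 * holeNumber 3 E := by
  classical
  cases isEmpty_or_nonempty V with
  | inl hemp => simp [Fintype.card_eq_zero]
  | inr hne =>
  obtain ⟨v0⟩ := hne
  set G : Fin 3 → SimpleGraph V := fun c => colorGraph E χ c with hG
  let CF : Fin 3 → V → Finset V := fun c x => Finset.univ.filter (fun y => (G c).Reachable x y)
  set m := maxMonoComponent 3 E χ with hm
  set S := {m | ∃ c : Fin 3, ∃ K : (G c).ConnectedComponent, m = K.supp.ncard} with hS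
  have hSmax : m = sSup S := rfl
  have hsupp : ∀ (c : Fin 3) (x : V),
      ((G c).connectedComponentMk x).supp = (↑(CF c x) : Set V) := by
    intro c x
    ext y
    simp only [SimpleGraph.ConnectedComponent.mem_supp_iff, SimpleGraph.ConnectedComponent.eq,
      Finset.coe_filter, Set.mem_setOf_eq, Finset.mem_univ, true_and, CF]
    exact ⟨fun h => h.symm, fun h => h.symm⟩
  have hSbdd : BddAbove S := by
    refine ⟨Fintype.card V, ?_⟩
    rintro b ⟨c, K, rfl⟩
    calc K.supp.ncard ≤ (Set.univ : Set V).ncard :=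
          Set.ncard_le_ncard (Set.subset_univ _) Set.finite_univ
      _ = Fintype.card V := by rw [Set.ncard_univ, Nat.card_eq_fintype_card]
  have hSne : S.Nonempty := ⟨_, ⟨0, (G 0).connectedComponentMk v0, rfl⟩⟩
  have hCFcard : ∀ (c : Fin 3) (x : V), (CF c x).card ≤ m := by
    intro c x
    have h1 : ((G c).connectedComponentMk x).supp.ncard = (CF c x).card := by
      rw [hsupp c x, Set.ncard_coe_finset]
    rw [hSmax, ← h1]
    exact le_csSup hSbdd ⟨c, _, rfl⟩
  have hmemS : m ∈ S := by rw [hSmax]; exact Nat.sSup_mem hSne hSbdd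
  obtain ⟨c0, K0, hK0⟩ := hmemS
  obtain ⟨x0, rfl⟩ := K0.exists_rep
  set M : Finset V := CF c0 x0 with hM
  have hMcard : M.card = m := by
    rw [hK0,
      show (Quot.mk (G c0).Reachable x0 : (G c0).ConnectedComponent)
        = (G c0).connectedComponentMk x0 from rfl,
      hsupp c0 x0, Set.ncard_coe_finset]
  have hMmem : ∀ x, x ∈ M ↔ (G c0).Reachable x0 x := by
    intro x; simp [hM, CF]
  have cov : ∀ x y : V, x ≠ y → ∃ c, (G c).Reachable x y := by
    intro x y hxy
    obtain ⟨e, ⟨he, hx, hy⟩, -⟩ := hE.2 x y hxy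
    exact ⟨χ e, SimpleGraph.Adj.reachable ⟨hxy, e, he, rfl, hx, hy⟩⟩
  have mono : ∀ e ∈ E, ∀ x ∈ e, ∀ y ∈ e, x ≠ y → (G (χ e)).Reachable x y := by
    intro e he x hx y hy hxy
    exact SimpleGraph.Adj.reachable ⟨hxy, e, he, rfl, hx, hy⟩
  obtain ⟨c1, c2, h01, h02, h12⟩ :=
    (by decide : ∀ c : Fin 3, ∃ d1 d2 : Fin 3, c ≠ d1 ∧ c ≠ d2 ∧ d1 ≠ d2) c0
  have hcolors : ∀ c : Fin 3, c = c0 ∨ c = c1 ∨ c = c2 :=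
    fun c => (by decide :
      ∀ a b c d : Fin 3, a ≠ b → a ≠ c → b ≠ c → (d = a ∨ d = b ∨ d = c))
      c0 c1 c2 c h01 h02 h12
  set W : Finset V := Mᶜ with hW
  have hWM : ∀ x, x ∈ W ↔ x ∉ M := by intro x; simp [hW]
  have hMW : ∀ x ∈ M, ∀ y ∈ W, x ≠ y := by
    intro x hx y hy h
    exact (hWM y).mp hy (h ▸ hx)
  have hMreach : ∀ x ∈ M, ∀ y, (G c0).Reachable x y → y ∈ M := by
    intro x hx y hxy
    rw [hMmem] at hx ⊢
    exact hx.trans hxy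
  have covW : ∀ u ∈ W, ∀ x ∈ M, (G c1).Reachable u x ∨ (G c2).Reachable u x := by
    intro u hu x hx
    obtain ⟨c, hc⟩ := cov u x (fun h => hMW x hx u hu h.symm)
    rcases hcolors c with rfl | rfl | rfl
    · exact absurd (hMreach x hx u hc.symm) ((hWM u).mp hu)
    · exact Or.inl hc
    · exact Or.inr hc
  have align : ∀ (i j : Fin 3), i ≠ c0 → j ≠ c0 → i ≠ j →
      ∀ u ∈ W, ∀ u' ∈ W, (G i).Reachable u u' → (G j).Reachable u u' := by
    intro i j hi hj hij u hu u' hu' hR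
    have hcase : (i = c1 ∧ j = c2) ∨ (i = c2 ∧ j = c1) :=
      (by decide : ∀ a b c i j : Fin 3, a ≠ b → a ≠ c → b ≠ c → i ≠ a → j ≠ a → i ≠ j →
        ((i = b ∧ j = c) ∨ (i = c ∧ j = b))) c0 c1 c2 i j h01 h02 h12 hi hj hij
    have covij : ∀ w ∈ W, ∀ x ∈ M, (G i).Reachable w x ∨ (G j).Reachable w x := by
      rcases hcase with ⟨rfl, rfl⟩ | ⟨rfl, rfl⟩
      · exact covW
      · exact fun w hw x hx => (covW w hw x hx).symm
    by_contra hno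
    have hsub : insert u M ⊆ CF i u := by
      intro y hy
      simp only [CF, Finset.mem_filter, Finset.mem_univ, true_and]
      rcases Finset.mem_insert.mp hy with rfl | hyM
      · exact SimpleGraph.Reachable.refl _
      · rcases covij u hu y hyM with h | h
        · exact h
        · rcases covij u' hu' y hyM with h' | h'
          · exact hR.trans h'
          · exact absurd (h.trans h'.symm) hno
    have h1 : M.card + 1 ≤ (CF i u).card := by
      rw [← Finset.card_insert_of_notMem ((hWM u).mp hu)]
      exact Finset.card_le_card hsub
    have h2 := hCFcard i u
    omega
  -- main case split on W
  rcases W.eq_empty_or_nonempty with hWemp | hWne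
  · have htotal := Finset.card_add_card_compl M
    rw [← hW, hWemp] at htotal
    simp only [Finset.card_empty] at htotal
    omega
  -- cells
  set cell : V → Finset V := fun u => W.filter (fun x => (G c1).Reachable u x) with hcell
  obtain ⟨v, hv, hvmax⟩ := Finset.exists_max_image W (fun u => (cell u).card) hWne
  set t := (cell v).card with ht
  have hcellW : ∀ u, cell u ⊆ W := fun u => Finset.filter_subset _ _
  have hmemcell : ∀ u x, x ∈ cell u ↔ (x ∈ W ∧ (G c1).Reachable u x) := by
    intro u x; simp [hcell]
  -- W.card ≤ 2 * t
  have hWle : W.card ≤ 2 * t := by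
    by_contra h2t
    push_neg at h2t
    have hnsub : ¬ W ⊆ cell v := by
      intro hs
      have := Finset.card_le_card hs
      omega
    obtain ⟨u, hu, hucell⟩ := Finset.not_subset.mp hnsub
    have hnsub2 : ¬ W ⊆ cell v ∪ cell u := by
      intro hs
      have h1 := Finset.card_le_card hs
      have h2 := Finset.card_union_le (cell v) (cell u)
      have h3 := hvmax u hu
      omega
    obtain ⟨z, hz, hzcell⟩ := Finset.not_subset.mp hnsub2
    have hzv : z ∉ cell v := fun h => hzcell (Finset.mem_union_left _ h)
    have hzu : z ∉ cell u := fun h => hzcell (Finset.mem_union_right _ h)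
    have nr1 : ∀ a, ∀ b ∈ W, b ∉ cell a → ¬ (G c1).Reachable a b := by
      intro a b hb hbc hr
      exact hbc ((hmemcell a b).mpr ⟨hb, hr⟩)
    have hvu1 := nr1 v u hu hucell
    have hvz1 := nr1 v z hz hzv
    have huz1 := nr1 u z hz hzu
    have hvu2 : ¬ (G c2).Reachable v u :=
      fun h => hvu1 (align c2 c1 (Ne.symm h02) (Ne.symm h01) (Ne.symm h12) v hv u hu h)
    have hvz2 : ¬ (G c2).Reachable v z :=
      fun h => hvz1 (align c2 c1 (Ne.symm h02) (Ne.symm h01) (Ne.symm h12) v hv z hz h)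
    have huz2 : ¬ (G c2).Reachable u z :=
      fun h => huz1 (align c2 c1 (Ne.symm h02) (Ne.symm h01) (Ne.symm h12) u hu z hz h)
    set P : V → Finset V := fun p => M.filter (fun x => (G c1).Reachable p x) with hP
    set Q : V → Finset V := fun p => M.filter (fun x => (G c2).Reachable p x) with hQ
    have hPQ : ∀ p ∈ W, M.card ≤ (P p).card + (Q p).card := by
      intro p hp
      have hsub : M ⊆ P p ∪ Q p := by
        intro x hx
        rcases covW p hp x hx with h | h
        · exact Finset.mem_union_left _ (Finset.mem_filter.mpr ⟨hx, h⟩)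
        · exact Finset.mem_union_right _ (Finset.mem_filter.mpr ⟨hx, h⟩)
      calc M.card ≤ (P p ∪ Q p).card := Finset.card_le_card hsub
        _ ≤ _ := Finset.card_union_le _ _
    have hPdisj : ∀ (a b : V), ¬ (G c1).Reachable a b → Disjoint (P a) (P b) := by
      intro a b hab
      rw [Finset.disjoint_left]
      intro x hxa hxb
      exact hab ((Finset.mem_filter.mp hxa).2.trans ((Finset.mem_filter.mp hxb).2.symm))
    have hQdisj : ∀ (a b : V), ¬ (G c2).Reachable a b → Disjoint (Q a) (Q b) := by
      intro a b hab
      rw [Finset.disjoint_left]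
      intro x hxa hxb
      exact hab ((Finset.mem_filter.mp hxa).2.trans ((Finset.mem_filter.mp hxb).2.symm))
    have hPsum : (P v).card + (P u).card + (P z).card ≤ M.card := by
      have hd1 := hPdisj v u hvu1
      have hd2 := hPdisj v z hvz1
      have hd3 := hPdisj u z huz1
      have hcardeq : ((P v ∪ P u) ∪ P z).card = (P v).card + (P u).card + (P z).card := by
        rw [Finset.card_union_of_disjoint (Finset.disjoint_union_left.mpr ⟨hd2, hd3⟩),
          Finset.card_union_of_disjoint hd1]
      rw [← hcardeq]
      exact Finset.card_le_card (Finset.union_subset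
        (Finset.union_subset (Finset.filter_subset _ _) (Finset.filter_subset _ _))
        (Finset.filter_subset _ _))
    have hQsum : (Q v).card + (Q u).card + (Q z).card ≤ M.card := by
      have hd1 := hQdisj v u hvu2
      have hd2 := hQdisj v z hvz2
      have hd3 := hQdisj u z huz2
      have hcardeq : ((Q v ∪ Q u) ∪ Q z).card = (Q v).card + (Q u).card + (Q z).card := by
        rw [Finset.card_union_of_disjoint (Finset.disjoint_union_left.mpr ⟨hd2, hd3⟩),
          Finset.card_union_of_disjoint hd1]
      rw [← hcardeq]
      exact Finset.card_le_card (Finset.union_subset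
        (Finset.union_subset (Finset.filter_subset _ _) (Finset.filter_subset _ _))
        (Finset.filter_subset _ _))
    have hMpos : 0 < M.card :=
      Finset.card_pos.mpr ⟨x0, (hMmem x0).mpr (SimpleGraph.Reachable.refl _)⟩
    have hv' := hPQ v hv
    have hu' := hPQ u hu
    have hz' := hPQ z hz
    omega
  -- cell v is also a c2-cell
  have hcv2 : ∀ x ∈ cell v, (G c2).Reachable v x := by
    intro x hx
    obtain ⟨hxW, hr⟩ := (hmemcell v x).mp hx
    exact align c1 c2 (Ne.symm h01) (Ne.symm h02) h12 v hv x hxW hr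
  -- size bounds for X1 X2
  have hsize : ∀ i : Fin 3, i ≠ c0 → t ≤ (W.filter (fun x => (G i).Reachable v x)).card →
      t ≤ (M.filter (fun x => ¬ (G i).Reachable v x)).card := by
    intro i hi hcellle
    have hsplit : (M.filter (fun x => (G i).Reachable v x)).card
        + (W.filter (fun x => (G i).Reachable v x)).card ≤ m := by
      have hsub : M.filter (fun x => (G i).Reachable v x)
          ∪ W.filter (fun x => (G i).Reachable v x) ⊆ CF i v := by
        intro y hy
        simp only [CF, Finset.mem_filter, Finset.mem_univ, true_and]
        rcases Finset.mem_union.mp hy with h | h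
        · exact (Finset.mem_filter.mp h).2
        · exact (Finset.mem_filter.mp h).2
      have hdis : Disjoint (M.filter (fun x => (G i).Reachable v x))
          (W.filter (fun x => (G i).Reachable v x)) :=
        Finset.disjoint_filter_filter (disjoint_compl_right)
      calc (M.filter _).card + (W.filter _).card
          = (M.filter (fun x => (G i).Reachable v x)
            ∪ W.filter (fun x => (G i).Reachable v x)).card :=
            (Finset.card_union_of_disjoint hdis).symm
        _ ≤ (CF i v).card := Finset.card_le_card hsub
        _ ≤ m := hCFcard i v
    have hMsplit := Finset.card_filter_add_card_filter_not
      (s := M) (p := fun x => (G i).Reachable v x)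
    omega
  have hX1big : t ≤ (M.filter (fun x => ¬ (G c1).Reachable v x)).card := by
    refine hsize c1 (Ne.symm h01) ?_
    exact le_of_eq ht
  have hX2big : t ≤ (M.filter (fun x => ¬ (G c2).Reachable v x)).card := by
    refine hsize c2 (Ne.symm h02) ?_
    refine le_trans (le_of_eq ht) (Finset.card_le_card ?_)
    intro x hx
    exact Finset.mem_filter.mpr ⟨hcellW v hx, hcv2 x hx⟩
  obtain ⟨X1, hX1sub, hX1card⟩ := Finset.exists_subset_card_eq hX1big
  obtain ⟨X2, hX2sub, hX2card⟩ := Finset.exists_subset_card_eq hX2big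
  set X3 := cell v with hX3
  -- membership facts
  have hX1M : ∀ x ∈ X1, x ∈ M ∧ ¬ (G c1).Reachable v x := by
    intro x hx
    exact Finset.mem_filter.mp (hX1sub hx)
  have hX2M : ∀ x ∈ X2, x ∈ M ∧ ¬ (G c2).Reachable v x := by
    intro x hx
    exact Finset.mem_filter.mp (hX2sub hx)
  have hX3W : ∀ x ∈ X3, x ∈ W ∧ (G c1).Reachable v x := fun x hx => (hmemcell v x).mp hx
  -- disjointness
  have d12 : Disjoint X1 X2 := by
    rw [Finset.disjoint_left]
    intro x hx1 hx2
    obtain ⟨hxM, hr1⟩ := hX1M x hx1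
    obtain ⟨-, hr2⟩ := hX2M x hx2
    rcases covW v hv x hxM with h | h
    · exact hr1 h
    · exact hr2 h
  have d13 : Disjoint X1 X3 := by
    rw [Finset.disjoint_left]
    intro x hx1 hx3
    exact (hWM x).mp (hX3W x hx3).1 (hX1M x hx1).1
  have d23 : Disjoint X2 X3 := by
    rw [Finset.disjoint_left]
    intro x hx2 hx3
    exact (hWM x).mp (hX3W x hx3).1 (hX2M x hx2).1
  -- the hole
  have hhole : HasHole 3 E t := by
    refine ⟨![X1, X2, X3], ?_, ?_, ?_⟩
    · intro i
      fin_cases i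
      · exact hX1card
      · exact hX2card
      · exact ht.symm
    · intro i j hij
      fin_cases i <;> fin_cases j <;>
        first
          | exact absurd rfl hij
          | exact d12 | exact d13 | exact d23
          | exact d12.symm | exact d13.symm | exact d23.symm
    · intro e he
      rcases hcolors (χ e) with hc | hc | hc
      · by_cases h3 : ∃ x ∈ e, x ∈ X3
        · obtain ⟨x3, hx3e, hx3⟩ := h3
          refine ⟨0, fun y hy hyX1 => ?_⟩
          simp only [Matrix.cons_val_zero] at hyX1
          obtain ⟨hyM, -⟩ := hX1M y hyX1
          have hx3W := (hX3W x3 hx3).1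
          have hne : y ≠ x3 := hMW y hyM x3 hx3W
          have hr := mono e he y hy x3 hx3e hne
          rw [hc] at hr
          exact (hWM x3).mp hx3W (hMreach y hyM x3 hr)
        · push_neg at h3
          exact ⟨2, by simpa using h3⟩
      · by_cases h3 : ∃ x ∈ e, x ∈ X3
        · obtain ⟨x3, hx3e, hx3⟩ := h3
          refine ⟨0, fun y hy hyX1 => ?_⟩
          simp only [Matrix.cons_val_zero] at hyX1
          obtain ⟨hyM, hnr⟩ := hX1M y hyX1
          obtain ⟨hx3W, hr3⟩ := hX3W x3 hx3
          have hne : x3 ≠ y := Ne.symm (hMW y hyM x3 hx3W)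
          have hr := mono e he x3 hx3e y hy hne
          rw [hc] at hr
          exact hnr (hr3.trans hr)
        · push_neg at h3
          exact ⟨2, by simpa using h3⟩
      · by_cases h3 : ∃ x ∈ e, x ∈ X3
        · obtain ⟨x3, hx3e, hx3⟩ := h3
          refine ⟨1, fun y hy hyX2 => ?_⟩
          simp only [Matrix.cons_val_one, Matrix.head_cons] at hyX2
          obtain ⟨hyM, hnr⟩ := hX2M y hyX2
          have hx3W := (hX3W x3 hx3).1
          have hr3 := hcv2 x3 hx3
          have hne : x3 ≠ y := Ne.symm (hMW y hyM x3 hx3W)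
          have hr := mono e he x3 hx3e y hy hne
          rw [hc] at hr
          exact hnr (hr3.trans hr)
        · push_neg at h3
          exact ⟨2, by simpa using h3⟩
  have hhn := holeNumber_ge E t hhole
  have htotal := Finset.card_add_card_compl M
  rw [← hW] at htotal
  omega

end Aux

/-- For every Steiner triple system `S` on `n` vertices, `mc_3(S) ≥ n − 2·α*_3(S)`. -/
theorem stmt5 {V : Type u} [Fintype V]
    (E : Finset (Finset V)) (hE : IsSTS E) :
    Fintype.card V - 2 * holeNumber 3 E ≤ mc 3 E := by
  classical
  show Fintype.card V - 2 * holeNumber 3 E ≤ sInf {m | ∃ χ : Finset V → Fin 3, m = maxMonoComponent 3 E χ}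
  apply le_csInf
    (⟨maxMonoComponent 3 E (fun _ => 0), ⟨fun _ => 0, rfl⟩⟩ :
      Set.Nonempty {m | ∃ χ : Finset V → Fin 3, m = maxMonoComponent 3 E χ})
  rintro b ⟨χ, rfl⟩
  rw [tsub_le_iff_right]
  exact key E hE χ
end

section
/- For every Steiner triple system S on n vertices, α*_3(S) ≤ n/3 − 1; that is, 3·α*_3(S) ≤ n − 3. -/
universe u

section AuxSTS

set_option linter.unusedSectionVars false

open Finset

variable {V : Type u} [DecidableEq V]

lemma card3_distinct {x y z : V} (h : ({x, y, z} : Finset V).card = 3) :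
    x ≠ y ∧ x ≠ z ∧ y ≠ z := by
  refine ⟨fun he => ?_, fun he => ?_, fun he => ?_⟩
  · have hsub : ({x, y, z} : Finset V) ⊆ {y, z} := by
      intro v hv; simp at hv ⊢; rcases hv with rfl | rfl | rfl <;> tauto
    have h2 : ({y, z} : Finset V).card ≤ 2 :=
      (Finset.card_insert_le _ _).trans (by simp)
    have := Finset.card_le_card hsub; omega
  · have hsub : ({x, y, z} : Finset V) ⊆ {x, y} := by
      intro v hv; simp at hv ⊢; rcases hv with rfl | rfl | rfl <;> tauto
    have h2 : ({x, y} : Finset V).card ≤ 2 :=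
      (Finset.card_insert_le _ _).trans (by simp)
    have := Finset.card_le_card hsub; omega
  · have hsub : ({x, y, z} : Finset V) ⊆ {x, y} := by
      intro v hv; simp at hv ⊢; rcases hv with rfl | rfl | rfl <;> tauto
    have h2 : ({x, y} : Finset V).card ≤ 2 :=
      (Finset.card_insert_le _ _).trans (by simp)
    have := Finset.card_le_card hsub; omega

lemma edge_unique {E : Finset (Finset V)} (hE : IsSTS E) {x y : V} (hxy : x ≠ y)
    {e e' : Finset V} (he : e ∈ E) (he' : e' ∈ E)
    (hx : x ∈ e) (hy : y ∈ e) (hx' : x ∈ e') (hy' : y ∈ e') : e = e' := by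
  obtain ⟨e0, -, hu⟩ := hE.2 x y hxy
  exact (hu e ⟨he, hx, hy⟩).trans (hu e' ⟨he', hx', hy'⟩).symm

lemma exists_third {E : Finset (Finset V)} (hE : IsSTS E) {x y : V} (hxy : x ≠ y) :
    ∃ z, ({x, y, z} : Finset V) ∈ E := by
  obtain ⟨e, ⟨heE, hx, hy⟩, -⟩ := hE.2 x y hxy
  have h3 := hE.1 e heE
  have hsub : ({x, y} : Finset V) ⊆ e := by
    intro v hv; rcases Finset.mem_insert.mp hv with rfl | hv
    · exact hx
    · rw [Finset.mem_singleton.mp hv]; exact hy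
  have hcard : (e \ {x, y}).card = 1 := by
    rw [Finset.card_sdiff_of_subset hsub, h3, Finset.card_pair hxy]
  obtain ⟨z, hz⟩ := Finset.card_eq_one.mp hcard
  refine ⟨z, ?_⟩
  have he2 : e = {x, y, z} := by
    have h4 := Finset.sdiff_union_of_subset hsub
    rw [hz] at h4
    rw [← h4]; ext v; simp; tauto
  rwa [← he2]

lemma third_unique {E : Finset (Finset V)} (hE : IsSTS E) {x y z z' : V} (hxy : x ≠ y)
    (h1 : ({x, y, z} : Finset V) ∈ E) (h2 : ({x, y, z'} : Finset V) ∈ E) : z = z' := by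
  have heq : ({x, y, z} : Finset V) = {x, y, z'} :=
    edge_unique hE hxy h1 h2 (by simp) (by simp) (by simp) (by simp)
  obtain ⟨-, hxz', hyz'⟩ := card3_distinct (hE.1 _ h2)
  have hz' : z' ∈ ({x, y, z} : Finset V) := heq ▸ (by simp : z' ∈ ({x, y, z'} : Finset V))
  simp at hz'
  rcases hz' with rfl | rfl | rfl
  · exact absurd rfl hxz'
  · exact absurd rfl hyz'
  · rfl

lemma sts_odd_card [Fintype V] {E : Finset (Finset V)} (hE : IsSTS E) (v0 : V) :
    Odd (Fintype.card V) := by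
  classical
  set D : Finset V := Finset.univ.erase v0 with hD
  set M : Finset (Finset V) := (E.filter (fun e => v0 ∈ e)).image (fun e => e.erase v0) with hM
  have hMD : ∀ s ∈ M, s.card = 2 ∧ s ⊆ D := by
    intro s hs
    obtain ⟨e, he, rfl⟩ := Finset.mem_image.mp hs
    obtain ⟨heE, hv0⟩ := Finset.mem_filter.mp he
    constructor
    · rw [Finset.card_erase_of_mem hv0, hE.1 e heE]
    · intro v hv
      exact Finset.mem_erase.mpr ⟨(Finset.mem_erase.mp hv).1, Finset.mem_univ v⟩
  have hcover : D = M.biUnion id := by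
    apply Finset.Subset.antisymm
    · intro v hv
      have hvne : v ≠ v0 := (Finset.mem_erase.mp hv).1
      obtain ⟨e, ⟨heE, hve, hv0e⟩, -⟩ := hE.2 v v0 hvne
      refine Finset.mem_biUnion.mpr ⟨e.erase v0, ?_, ?_⟩
      · exact Finset.mem_image.mpr ⟨e, Finset.mem_filter.mpr ⟨heE, hv0e⟩, rfl⟩
      · exact Finset.mem_erase.mpr ⟨hvne, hve⟩
    · intro v hv
      obtain ⟨s, hs, hvs⟩ := Finset.mem_biUnion.mp hv
      exact (hMD s hs).2 hvs
  have hdisj : ∀ s ∈ M, ∀ s' ∈ M, s ≠ s' → Disjoint (id s) (id s') := by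
    intro s hs s' hs' hne
    obtain ⟨e, he, rfl⟩ := Finset.mem_image.mp hs
    obtain ⟨e', he', rfl⟩ := Finset.mem_image.mp hs'
    obtain ⟨heE, hv0⟩ := Finset.mem_filter.mp he
    obtain ⟨heE', hv0'⟩ := Finset.mem_filter.mp he'
    rw [Finset.disjoint_left]
    intro v hv hv'
    obtain ⟨hvne, hve⟩ := Finset.mem_erase.mp hv
    obtain ⟨-, hve'⟩ := Finset.mem_erase.mp hv'
    exact hne (by rw [edge_unique hE hvne heE heE' hve hv0 hve' hv0'])
  have hcard : D.card = 2 * M.card := by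
    rw [hcover, Finset.card_biUnion hdisj]
    simp only [id_eq]
    rw [Finset.sum_congr rfl (fun s hs => (hMD s hs).1), Finset.sum_const, smul_eq_mul, mul_comm]
  have hDcard : D.card + 1 = Fintype.card V := by
    rw [hD, Finset.card_erase_of_mem (Finset.mem_univ v0), Finset.card_univ]
    have : 1 ≤ Fintype.card V := Fintype.card_pos_iff.mpr ⟨v0⟩
    omega
  exact ⟨M.card, by omega⟩

end AuxSTS

def sig1 : Fin 3 → Fin 3 := ![0, 0, 1]
def sig2 : Fin 3 → Fin 3 := ![1, 2, 2]

lemma sig_ne : ∀ t, sig1 t ≠ sig2 t := by decide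

lemma sig_univ : ∀ t k i : Fin 3, k ≠ sig1 t → k ≠ sig2 t →
    i = sig1 t ∨ i = sig2 t ∨ i = k := by decide

lemma sig_inj : ∀ t t' : Fin 3,
    (sig1 t' = sig1 t ∨ sig1 t' = sig2 t) → (sig2 t' = sig1 t ∨ sig2 t' = sig2 t) →
    t = t' := by decide

lemma hole_le {V : Type u} [Fintype V] [DecidableEq V] {E : Finset (Finset V)}
    (hE : IsSTS E) {a : ℕ} (hh : HasHole 3 E a) : 3 * a + 3 ≤ Fintype.card V ∨ a = 0 := by
  classical
  rcases Nat.eq_zero_or_pos a with rfl | ha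
  · exact Or.inr rfl
  left
  obtain ⟨X, hXc, hXd, hXm⟩ := hh
  set n := Fintype.card V with hn
  have hpart : ∀ i j (v : V), v ∈ X i → v ∈ X j → i = j := by
    intro i j v hi hj
    by_contra hne
    exact Finset.disjoint_left.mp (hXd i j hne) hi hj
  set U : Finset V := X 0 ∪ (X 1 ∪ X 2) with hUdef
  have hXU : ∀ i, X i ⊆ U := by
    intro i
    fin_cases i <;> intro v hv <;> simp [hUdef] <;> tauto
  have hU : U.card = 3 * a := by
    rw [hUdef, Finset.card_union_of_disjoint, Finset.card_union_of_disjoint (hXd 1 2 (by decide)),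
      hXc 0, hXc 1, hXc 2]
    · ring
    · rw [Finset.disjoint_union_right]
      exact ⟨hXd 0 1 (by decide), hXd 0 2 (by decide)⟩
  set P : Finset (Fin 3 × V × V) :=
    Finset.univ.biUnion (fun t => {t} ×ˢ (X (sig1 t) ×ˢ X (sig2 t))) with hPdef
  have hPmem : ∀ w : Fin 3 × V × V,
      w ∈ P ↔ w.2.1 ∈ X (sig1 w.1) ∧ w.2.2 ∈ X (sig2 w.1) := by
    rintro ⟨t, x, y⟩
    simp only [hPdef, Finset.mem_biUnion, Finset.mem_univ, true_and, Finset.mem_product,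
      Finset.mem_singleton]
    constructor
    · rintro ⟨t', ⟨rfl, hx, hy⟩⟩; exact ⟨hx, hy⟩
    · rintro ⟨hx, hy⟩; exact ⟨t, rfl, hx, hy⟩
  have hPcard : P.card = 3 * (a * a) := by
    rw [hPdef, Finset.card_biUnion]
    · have : ∀ t : Fin 3, ({t} ×ˢ (X (sig1 t) ×ˢ X (sig2 t))).card = a * a := by
        intro t
        rw [Finset.card_product, Finset.card_product, Finset.card_singleton, hXc, hXc, one_mul]
      rw [Finset.sum_congr rfl (fun t _ => this t), Finset.sum_const, Finset.card_univ]
      simp [mul_comm]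
    · intro t _ t' _ hne
      simp only [Function.onFun]; rw [Finset.disjoint_left]
      intro w hw hw'
      rw [Finset.mem_product, Finset.mem_product, Finset.mem_singleton] at hw hw'
      exact hne (hw.1.symm.trans hw'.1)
  set F : V → Finset (Fin 3 × V × V) :=
    fun z => P.filter (fun w => ({w.2.1, w.2.2, z} : Finset V) ∈ E) with hFdef
  have hFmem : ∀ z (w : Fin 3 × V × V), w ∈ F z ↔
      (w.2.1 ∈ X (sig1 w.1) ∧ w.2.2 ∈ X (sig2 w.1)) ∧ ({w.2.1, w.2.2, z} : Finset V) ∈ E := by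
    intro z w
    rw [hFdef, Finset.mem_filter, hPmem]
  -- basic facts for members of fibers
  have hFfacts : ∀ z (w : Fin 3 × V × V), w ∈ F z →
      w.2.1 ≠ w.2.2 ∧ w.2.1 ≠ z ∧ w.2.2 ≠ z := by
    intro z w hw
    exact card3_distinct (hE.1 _ ((hFmem z w).mp hw).2)
  -- shared vertex implies equal fiber elements
  have hshare : ∀ z : V, ∀ w ∈ F z, ∀ w' ∈ F z, ∀ v : V,
      (v = w.2.1 ∨ v = w.2.2) → (v = w'.2.1 ∨ v = w'.2.2) → w = w' := by
    rintro z ⟨t, x, y⟩ hw ⟨t', x', y'⟩ hw' v hv hv'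
    obtain ⟨⟨hx, hy⟩, he⟩ := (hFmem z _).mp hw
    obtain ⟨⟨hx', hy'⟩, he'⟩ := (hFmem z _).mp hw'
    obtain ⟨hxy, hxz, hyz⟩ := hFfacts z _ hw
    obtain ⟨hxy', hxz', hyz'⟩ := hFfacts z _ hw'
    simp only at hx hy hx' hy' hxy hxz hyz hxy' hxz' hyz' hv hv' ⊢
    have hvz : v ≠ z := by rcases hv with rfl | rfl; exacts [hxz, hyz]
    have heq : ({x, y, z} : Finset V) = {x', y', z} := by
      refine edge_unique hE hvz he he' ?_ (by simp) ?_ (by simp)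
      · rcases hv with rfl | rfl <;> simp
      · rcases hv' with rfl | rfl <;> simp
    have hmx' : x' = x ∨ x' = y := by
      have : x' ∈ ({x, y, z} : Finset V) := heq ▸ (by simp : x' ∈ ({x', y', z} : Finset V))
      simp at this
      rcases this with h | h | h
      exacts [Or.inl h, Or.inr h, absurd h hxz']
    have hmy' : y' = x ∨ y' = y := by
      have : y' ∈ ({x, y, z} : Finset V) := heq ▸ (by simp : y' ∈ ({x', y', z} : Finset V))
      simp at this
      rcases this with h | h | h
      exacts [Or.inl h, Or.inr h, absurd h hyz']
    have i1 : sig1 t' = sig1 t ∨ sig1 t' = sig2 t := by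
      rcases hmx' with h | h
      · exact Or.inl (hpart (sig1 t') (sig1 t) x' hx' (by rw [h]; exact hx))
      · exact Or.inr (hpart (sig1 t') (sig2 t) x' hx' (by rw [h]; exact hy))
    have i2 : sig2 t' = sig1 t ∨ sig2 t' = sig2 t := by
      rcases hmy' with h | h
      · exact Or.inl (hpart (sig2 t') (sig1 t) y' hy' (by rw [h]; exact hx))
      · exact Or.inr (hpart (sig2 t') (sig2 t) y' hy' (by rw [h]; exact hy))
    have htt : t = t' := sig_inj t t' i1 i2
    subst htt
    have hxx : x = x' := by
      rcases hmx' with h | h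
      · exact h.symm
      · exact absurd (hpart (sig1 t) (sig2 t) x' hx' (by rw [h]; exact hy)) (sig_ne t)
    have hyy : y = y' := by
      rcases hmy' with h | h
      · exact absurd (hpart (sig2 t) (sig1 t) y' hy' (by rw [h]; exact hx)).symm (sig_ne t)
      · exact h.symm
    rw [hxx, hyy]
  -- decomposition of P as disjoint union of fibers
  have hPF : P = Finset.univ.biUnion F := by
    apply Finset.Subset.antisymm
    · intro w hw
      obtain ⟨hx, hy⟩ := (hPmem w).mp hw
      have hxy : w.2.1 ≠ w.2.2 := by
        intro h
        exact sig_ne w.1 (hpart _ _ w.2.1 hx (by rw [h]; exact hy))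
      obtain ⟨z, hz⟩ := exists_third hE hxy
      exact Finset.mem_biUnion.mpr ⟨z, Finset.mem_univ z, (hFmem z w).mpr ⟨⟨hx, hy⟩, hz⟩⟩
    · intro w hw
      obtain ⟨z, -, hz⟩ := Finset.mem_biUnion.mp hw
      exact (hPmem w).mpr ((hFmem z w).mp hz).1
  have hFdisj : ∀ z ∈ (Finset.univ : Finset V), ∀ z' ∈ Finset.univ, z ≠ z' →
      Disjoint (F z) (F z') := by
    intro z _ z' _ hne
    rw [Finset.disjoint_left]
    intro w hw hw'
    obtain ⟨hxy, -, -⟩ := hFfacts z w hw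
    exact hne (third_unique hE hxy ((hFmem z w).mp hw).2 ((hFmem z' w).mp hw').2)
  have hsum : ∑ z, (F z).card = 3 * (a * a) := by
    rw [← hPcard, hPF, Finset.card_biUnion hFdisj]
  -- bound for fibers: twice the card is at most 3a
  have hgdisj : ∀ z, ∀ w ∈ F z, ∀ w' ∈ F z, w ≠ w' →
      Disjoint ({w.2.1, w.2.2} : Finset V) ({w'.2.1, w'.2.2} : Finset V) := by
    intro z w hw w' hw' hne
    rw [Finset.disjoint_left]
    intro v hv hv'
    simp at hv hv'
    exact hne (hshare z w hw w' hw' v hv hv')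
  have boundY : ∀ z, 2 * (F z).card ≤ 3 * a := by
    intro z
    have h1 : ∑ w ∈ F z, ({w.2.1, w.2.2} : Finset V).card = 2 * (F z).card := by
      rw [Finset.sum_congr rfl (fun w hw => Finset.card_pair (hFfacts z w hw).1),
        Finset.sum_const, smul_eq_mul, mul_comm]
    rw [← hU, ← h1, ← Finset.card_biUnion (hgdisj z)]
    apply Finset.card_le_card
    rw [Finset.biUnion_subset]
    intro w hw
    obtain ⟨⟨hx, hy⟩, -⟩ := (hFmem z w).mp hw
    intro v hv
    simp at hv
    rcases hv with rfl | rfl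
    · exact hXU _ hx
    · exact hXU _ hy
  -- bound for fibers through vertices of U
  have boundX : ∀ k, ∀ z ∈ X k, (F z).card + 1 ≤ a := by
    intro k z hzk
    have hmaps : ∀ w ∈ F z, (if sig1 w.1 = k then w.2.1 else w.2.2) ∈ (X k).erase z := by
      intro w hw
      obtain ⟨⟨hx, hy⟩, he⟩ := (hFmem z w).mp hw
      obtain ⟨hxy, hxz, hyz⟩ := hFfacts z w hw
      have hk : k = sig1 w.1 ∨ k = sig2 w.1 := by
        by_contra hcon
        push_neg at hcon
        obtain ⟨i, hi⟩ := hXm _ he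
        rcases sig_univ w.1 k i hcon.1 hcon.2 with rfl | rfl | rfl
        · exact hi w.2.1 (by simp) hx
        · exact hi w.2.2 (by simp) hy
        · exact hi z (by simp) hzk
      by_cases hcase : sig1 w.1 = k
      · rw [if_pos hcase]
        exact Finset.mem_erase.mpr ⟨hxz, hcase ▸ hx⟩
      · rw [if_neg hcase]
        rcases hk with h | h
        · exact absurd h.symm hcase
        · exact Finset.mem_erase.mpr ⟨hyz, h ▸ hy⟩
    have hinj : Set.InjOn (fun w : Fin 3 × V × V => if sig1 w.1 = k then w.2.1 else w.2.2)
        ↑(F z) := by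
      intro w hw w' hw' hvw
      simp only at hvw
      refine hshare z w hw w' hw' (if sig1 w.1 = k then w.2.1 else w.2.2) ?_ ?_
      · by_cases h : sig1 w.1 = k <;> simp [h]
      · rw [hvw]; by_cases h : sig1 w'.1 = k <;> simp [h]
    have := Finset.card_le_card_of_injOn _ hmaps hinj
    rw [Finset.card_erase_of_mem hzk, hXc k] at this
    omega
  -- put everything together
  set m : ℕ := (Finset.univ \ U).card with hmdef
  have hmn : 3 * a + m = n := by
    rw [hmdef, Finset.card_sdiff_of_subset (Finset.subset_univ U), hU, Finset.card_univ]
    have : U.card ≤ n := Finset.card_le_card (Finset.subset_univ U) |>.trans_eq (by rw [Finset.card_univ])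
    rw [hU] at this
    omega
  have hsplit : (∑ z ∈ Finset.univ \ U, (F z).card) + ∑ z ∈ U, (F z).card = 3 * (a * a) := by
    rw [← hsum]
    exact Finset.sum_sdiff (Finset.subset_univ U)
  have hSU : (∑ z ∈ U, (F z).card) + 3 * a ≤ 3 * a * a := by
    have h1 : ∑ z ∈ U, ((F z).card + 1) ≤ ∑ z ∈ U, a := by
      apply Finset.sum_le_sum
      intro z hz
      rw [hUdef] at hz
      simp [Finset.mem_union] at hz
      rcases hz with hz | hz | hz
      exacts [boundX 0 z hz, boundX 1 z hz, boundX 2 z hz]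
    rw [Finset.sum_add_distrib, Finset.sum_const, Finset.sum_const, smul_eq_mul, mul_one,
      smul_eq_mul, hU] at h1
    linarith [h1]
  -- two cases according to parity of a
  have hm3 : 3 ≤ m := by
    rcases Nat.even_or_odd a with haeven | haodd
    · -- even case : use parity of n
      have h2 : 2 * ∑ z ∈ Finset.univ \ U, (F z).card ≤ 3 * a * m := by
        calc 2 * ∑ z ∈ Finset.univ \ U, (F z).card
            = ∑ z ∈ Finset.univ \ U, 2 * (F z).card := by rw [Finset.mul_sum]
          _ ≤ ∑ z ∈ Finset.univ \ U, 3 * a := Finset.sum_le_sum (fun z _ => boundY z)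
          _ = 3 * a * m := by rw [Finset.sum_const, smul_eq_mul, mul_comm, hmdef]
      have hkey : 6 * a ≤ 3 * a * m := by
        have e1 : 2 * ((∑ z ∈ Finset.univ \ U, (F z).card) + ∑ z ∈ U, (F z).card)
            = 6 * (a * a) := by rw [hsplit]; ring
        nlinarith [hSU, h2, e1]
      have hm2 : 2 ≤ m := by
        by_contra hcon
        push_neg at hcon
        have : 3 * a * m ≤ 3 * a * 1 := Nat.mul_le_mul_left _ (by omega)
        omega
      -- n is odd
      obtain ⟨x0, hx0⟩ := Finset.card_pos.mp (by rw [hXc 0]; omega : 0 < (X 0).card)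
      obtain ⟨k, hk⟩ := sts_odd_card hE x0
      obtain ⟨l, hl⟩ := haeven
      omega
    · -- odd case : improved fiber bound
      have h2 : 2 * (∑ z ∈ Finset.univ \ U, (F z).card) + m ≤ 3 * a * m := by
        have h1 : ∑ z ∈ Finset.univ \ U, (2 * (F z).card + 1) ≤ ∑ z ∈ Finset.univ \ U, (3 * a) := by
          apply Finset.sum_le_sum
          intro z _
          have := boundY z
          obtain ⟨l, hl⟩ := haodd
          omega
        rw [Finset.sum_add_distrib, Finset.sum_const, Finset.sum_const, smul_eq_mul, mul_one,
          smul_eq_mul, ← Finset.mul_sum, ← hmdef] at h1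
        linarith [h1]
      have hkey : 6 * a + m ≤ 3 * a * m := by
        have e1 : 2 * ((∑ z ∈ Finset.univ \ U, (F z).card) + ∑ z ∈ U, (F z).card)
            = 6 * (a * a) := by rw [hsplit]; ring
        nlinarith [hSU, h2, e1]
      by_contra hcon
      push_neg at hcon
      have h3 : 3 * a * m ≤ 3 * a * 2 := Nat.mul_le_mul_left _ (by omega)
      have h4 : m = 0 := by omega
      rw [h4, mul_zero] at hkey
      omega
  omega


/-- For every Steiner triple system `S` on `n` vertices, `α*_3(S) ≤ n/3 − 1`,
i.e. `3·α*_3(S) ≤ n − 3`. -/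
theorem stmt6 {V : Type u} [Fintype V]
    (E : Finset (Finset V)) (hE : IsSTS E) :
    3 * holeNumber 3 E ≤ Fintype.card V - 3 := by
  classical
  have h0 : HasHole 3 E 0 := by
    refine ⟨fun _ => ∅, fun i => Finset.card_empty, fun i j _ => Finset.disjoint_empty_left _,
      fun e he => ⟨0, fun v _ => Finset.notMem_empty v⟩⟩
  have hbdd : BddAbove {a | HasHole 3 E a} := by
    refine ⟨Fintype.card V, fun a ha => ?_⟩
    rcases hole_le hE ha with h | rfl
    · omega
    · omega
  have hmem : holeNumber 3 E ∈ {a | HasHole 3 E a} := Nat.sSup_mem ⟨0, h0⟩ hbdd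
  rcases hole_le hE hmem with h | h
  · omega
  · rw [holeNumber] at h ⊢
    rw [h]
    omega
end

section
/- If a Steiner triple system S on n vertices is (a,b,c)-bicolorable with a ≤ b ≤ c (so a + b + c = n), then mc_3(S) ≤ b + c. -/
universe u

/-- If a Steiner triple system `S` on `n` vertices is `(a,b,c)`-bicolorable with
`a ≤ b ≤ c`, then `mc_3(S) ≤ b + c`.  (Colors of the bicoloring are `0, 1, 2`;
a bicoloring is a vertex coloring in which every edge sees exactly two colors.) -/
theorem stmt11 {V : Type u} [Fintype V] [DecidableEq V]
    (E : Finset (Finset V)) (hE : IsSTS E)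
    (a b c : ℕ) (hab : a ≤ b) (hbc : b ≤ c)
    (φ : V → Fin 3)
    (hbi : ∀ e ∈ E, (e.image φ).card = 2)
    (hca : (Finset.univ.filter fun v => φ v = 0).card = a)
    (hcb : (Finset.univ.filter fun v => φ v = 1).card = b)
    (hcc : (Finset.univ.filter fun v => φ v = 2).card = c) :
    mc 3 E ≤ b + c := by
  classical
  set χ : Finset V → Fin 3 := fun e =>
    if (0:Fin 3) ∉ e.image φ then 0 else if (1:Fin 3) ∉ e.image φ then 1 else 2 with hχ
  have key : ∀ e ∈ E, ∀ v ∈ e, φ v ≠ χ e := by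
    intro e he v hv
    have hmem : φ v ∈ e.image φ := Finset.mem_image_of_mem φ hv
    have hcard := hbi e he
    by_cases h0 : (0:Fin 3) ∉ e.image φ
    · have hc0 : χ e = 0 := by simp only [hχ]; exact if_pos h0
      rw [hc0]; intro h; exact h0 (h ▸ hmem)
    · by_cases h1 : (1:Fin 3) ∉ e.image φ
      · have hc1 : χ e = 1 := by simp only [hχ]; rw [if_neg h0, if_pos h1]
        rw [hc1]; intro h; exact h1 (h ▸ hmem)
      · have hc2 : χ e = 2 := by simp only [hχ]; rw [if_neg h0, if_neg h1]
        rw [hc2]; intro h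
        push_neg at h0 h1
        have hsub : ({0,1,2} : Finset (Fin 3)) ⊆ e.image φ := by
          intro x hx
          fin_cases hx
          · exact h0
          · exact h1
          · exact h ▸ hmem
        have := Finset.card_le_card hsub
        simp at this
        omega
  have hn : a + b + c = Fintype.card V := by
    have := Finset.card_eq_sum_card_fiberwise
      (f := φ) (s := Finset.univ) (t := Finset.univ) (fun x _ => Finset.mem_univ _)
    rw [Finset.card_univ] at this
    rw [this, Fin.sum_univ_three, hca, hcb, hcc]
  have hle : mc 3 E ≤ maxMonoComponent 3 E χ := Nat.sInf_le ⟨χ, rfl⟩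
  refine hle.trans ?_
  refine csSup_le' ?_
  rintro m ⟨k, K, rfl⟩
  obtain ⟨v0, hv0⟩ := K.exists_rep
  have hv0supp : v0 ∈ K.supp := hv0
  by_cases hsingle : K.supp ⊆ {v0}
  · have hsub : K.supp = {v0} := Set.Subset.antisymm hsingle (by simp [hv0supp])
    rw [hsub, Set.ncard_singleton]
    have : 1 ≤ Fintype.card V := Fintype.card_pos_iff.mpr ⟨v0⟩
    omega
  · rw [Set.not_subset] at hsingle
    obtain ⟨w, hw, hwne⟩ := hsingle
    simp only [Set.mem_singleton_iff] at hwne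
    have hkey : ∀ v ∈ K.supp, φ v ≠ k := by
      intro v hvK
      have hreach : ∀ t : V, t ∈ K.supp → v ≠ t → ∃ e ∈ E, χ e = k ∧ v ∈ e := by
        intro t ht hne
        rw [SimpleGraph.ConnectedComponent.mem_supp_iff] at hvK ht
        have : (colorGraph E χ k).Reachable v t := by
          rw [← SimpleGraph.ConnectedComponent.eq]
          rw [hvK, ht]
        obtain ⟨p⟩ := this
        cases p with
        | nil => exact absurd rfl hne
        | cons h _ =>
          obtain ⟨-, e, he, hek, hv, -⟩ := h
          exact ⟨e, he, hek, hv⟩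
      by_cases hvv0 : v = v0
      · obtain ⟨e, he, hek, hv⟩ := hreach w hw (by rw [hvv0]; exact Ne.symm hwne)
        exact hek ▸ key e he v hv
      · obtain ⟨e, he, hek, hv⟩ := hreach v0 hv0supp hvv0
        exact hek ▸ key e he v hv
    have hss : K.supp ⊆ ↑(Finset.univ.filter fun v => φ v ≠ k) := by
      intro v hv
      simp only [Finset.coe_filter, Set.mem_setOf_eq, Finset.mem_univ, true_and]
      exact hkey v hv
    have h1 : K.supp.ncard ≤ (Finset.univ.filter fun v => φ v ≠ k).card := by
      rw [← Set.ncard_coe_finset]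
      exact Set.ncard_le_ncard hss (Set.toFinite _)
    have h2 : (Finset.univ.filter fun v => φ v = k).card
        + (Finset.univ.filter fun v => φ v ≠ k).card = Fintype.card V := by
      rw [← Finset.card_univ]
      exact Finset.card_filter_add_card_filter_not _
    have hclass : a ≤ (Finset.univ.filter fun v => φ v = k).card := by
      fin_cases k
      · exact le_of_eq hca.symm
      · exact hab.trans (le_of_eq hcb.symm)
      · exact (hab.trans hbc).trans (le_of_eq hcc.symm)
    omega
end

section
/- Define sequences of natural numbers by M_0 = 24, N_0 = 33, and for k ≥ 1, M_k = M_{k−1}^2 + 2·M_{k−1}·N_{k−1} and N_k = 2·M_{k−1}^2 + N_{k−1}^2. Then M_k → ∞ and N_k → ∞ as k → ∞, and the ratio M_k / N_k tends to 1 as k → ∞. -/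
/-- For the sequences `M_0 = 24`, `N_0 = 33`, `M_k = M_{k−1}² + 2·M_{k−1}·N_{k−1}`,
`N_k = 2·M_{k−1}² + N_{k−1}²`, we have `M_k → ∞`, `N_k → ∞`, and `M_k / N_k → 1`. -/
theorem stmt14 (M N : ℕ → ℕ) (hM0 : M 0 = 24) (hN0 : N 0 = 33)
    (hM : ∀ k, M (k + 1) = M k ^ 2 + 2 * M k * N k)
    (hN : ∀ k, N (k + 1) = 2 * M k ^ 2 + N k ^ 2) :
    Filter.Tendsto M Filter.atTop Filter.atTop ∧
    Filter.Tendsto N Filter.atTop Filter.atTop ∧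
    Filter.Tendsto (fun k => (M k : ℝ) / (N k : ℝ)) Filter.atTop (nhds 1) := by
  -- M_k ≥ 2^k + 2
  have hMge : ∀ k, 2 ^ k + 2 ≤ M k := by
    intro k
    induction k with
    | zero => simp [hM0]
    | succ k ih =>
      rw [hM k]
      have h2 : 1 ≤ (2:ℕ) ^ k := Nat.one_le_two_pow
      have h3 : 2 ^ (k+1) + 2 ≤ (2 ^ k + 2) ^ 2 := by
        rw [pow_succ]; nlinarith
      calc 2 ^ (k+1) + 2 ≤ (2 ^ k + 2) ^ 2 := h3
        _ ≤ M k ^ 2 := Nat.pow_le_pow_left ih 2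
        _ ≤ M k ^ 2 + 2 * M k * N k := Nat.le_add_right _ _
  -- N_k = M_k + 9^(2^k)
  have hd : ∀ k, N k = M k + 9 ^ (2 ^ k) := by
    intro k
    induction k with
    | zero => simp [hM0, hN0]
    | succ k ih =>
      have h9 : (9:ℕ) ^ 2 ^ (k+1) = (9 ^ 2 ^ k) ^ 2 := by
        rw [pow_succ, pow_mul]
      rw [hN k, hM k, ih, h9]
      ring
  -- N_k ≥ 2^(k+1) * 9^(2^k)
  have hNge : ∀ k, 2 ^ (k + 1) * 9 ^ (2 ^ k) ≤ N k := by
    intro k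
    induction k with
    | zero => simp [hN0]
    | succ k ih =>
      have h1 : (2:ℕ) ^ (k + 2) * 9 ^ (2 ^ (k + 1)) ≤ (2 ^ (k + 1) * 9 ^ (2 ^ k)) ^ 2 := by
        have h9 : (9:ℕ) ^ 2 ^ (k+1) = (9 ^ 2 ^ k) ^ 2 := by
          rw [pow_succ, pow_mul]
        rw [h9]
        have : (2:ℕ) ^ (k + 2) ≤ 2 ^ (2 * (k + 1)) :=
          Nat.pow_le_pow_right (by norm_num) (by omega)
        calc (2:ℕ) ^ (k + 2) * (9 ^ (2 ^ k)) ^ 2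
            ≤ 2 ^ (2 * (k+1)) * (9 ^ (2 ^ k)) ^ 2 := Nat.mul_le_mul_right _ this
          _ = (2 ^ (k + 1) * 9 ^ (2 ^ k)) ^ 2 := by ring
      calc (2:ℕ) ^ (k + 1 + 1) * 9 ^ (2 ^ (k + 1))
          ≤ (2 ^ (k + 1) * 9 ^ (2 ^ k)) ^ 2 := h1
        _ ≤ N k ^ 2 := Nat.pow_le_pow_left ih 2
        _ ≤ 2 * M k ^ 2 + N k ^ 2 := Nat.le_add_left _ _
        _ = N (k + 1) := (hN k).symm
  have hNpos : ∀ k, 0 < N k := fun k => by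
    have := hd k; have := Nat.pow_pos (n := 2^k) (show 0 < 9 by norm_num); omega
  -- M → ∞
  have hMtop : Filter.Tendsto M Filter.atTop Filter.atTop := by
    apply Filter.tendsto_atTop_mono (fun k => le_trans (Nat.le_add_right _ 2) (hMge k))
    exact tendsto_pow_atTop_atTop_of_one_lt (by norm_num)
  have hNtop : Filter.Tendsto N Filter.atTop Filter.atTop := by
    apply Filter.tendsto_atTop_mono (fun k => ?_) hMtop
    rw [hd k]; exact Nat.le_add_right _ _
  refine ⟨hMtop, hNtop, ?_⟩
  -- ratio
  have key : ∀ k, (M k : ℝ) / (N k : ℝ) = 1 - (9:ℝ) ^ (2 ^ k) / (N k : ℝ) := by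
    intro k
    have hN0' : (N k : ℝ) ≠ 0 := Nat.cast_ne_zero.mpr (hNpos k).ne'
    field_simp
    have := hd k
    push_cast [this]
    ring
  have hf : Filter.Tendsto (fun k => (9:ℝ) ^ (2 ^ k) / (N k : ℝ)) Filter.atTop (nhds 0) := by
    have hg : Filter.Tendsto (fun k : ℕ => ((1:ℝ)/2) ^ (k + 1)) Filter.atTop (nhds 0) := by
      have := tendsto_pow_atTop_nhds_zero_of_lt_one (le_of_lt (by norm_num : (0:ℝ) < 1/2))
        (by norm_num : (1:ℝ)/2 < 1)
      exact this.comp (Filter.tendsto_add_atTop_nat 1)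
    apply squeeze_zero (fun k => by positivity) (fun k => ?_) hg
    have hNk : (0:ℝ) < (N k : ℝ) := Nat.cast_pos.mpr (hNpos k)
    have hcast : ((2:ℝ) ^ (k+1)) * 9 ^ (2 ^ k) ≤ (N k : ℝ) := by
      have := hNge k
      calc ((2:ℝ) ^ (k+1)) * 9 ^ (2 ^ k) = ((2 ^ (k+1) * 9 ^ (2 ^ k) : ℕ) : ℝ) := by push_cast; ring
        _ ≤ (N k : ℝ) := Nat.cast_le.mpr this
    rw [div_le_iff₀ hNk, div_pow, one_pow, div_mul_eq_mul_div, le_div_iff₀ (by positivity)]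
    calc (9:ℝ) ^ (2 ^ k) * 2 ^ (k+1) = 2 ^ (k+1) * 9 ^ (2 ^ k) := mul_comm _ _
      _ ≤ (N k : ℝ) := hcast
      _ = 1 * (N k : ℝ) := (one_mul _).symm
  have := (tendsto_const_nhds (x := (1:ℝ)) (f := Filter.atTop (α := ℕ))).sub hf
  rw [sub_zero] at this
  exact this.congr (fun k => (key k).symm)
end

section
/- Let r : ℕ → ℝ satisfy 0 < r_0 ≤ 1 and r_{k} = r_{k−1}·(r_{k−1} + 2)/(2·r_{k−1}^2 + 1) for all k ≥ 1. Then the sequence (r_k) is nondecreasing, satisfies r_k ≤ 1 for all k, and converges to 1. -/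
/-- If `0 < r_0 ≤ 1` and `r_k = r_{k−1}(r_{k−1} + 2)/(2r_{k−1}² + 1)` for all `k ≥ 1`,
then `(r_k)` is nondecreasing, bounded above by `1`, and converges to `1`. -/
theorem stmt15 (r : ℕ → ℝ) (h0 : 0 < r 0) (h1 : r 0 ≤ 1)
    (hrec : ∀ k, r (k + 1) = r k * (r k + 2) / (2 * r k ^ 2 + 1)) :
    Monotone r ∧ (∀ k, r k ≤ 1) ∧ Filter.Tendsto r Filter.atTop (nhds 1) := by
  have hden : ∀ x : ℝ, 0 < 2 * x ^ 2 + 1 := fun x => by positivity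
  have hpos : ∀ k, 0 < r k := by
    intro k
    induction k with
    | zero => exact h0
    | succ n ih =>
      rw [hrec n]
      have := hden (r n)
      positivity
  have hle : ∀ k, r k ≤ 1 := by
    intro k
    induction k with
    | zero => exact h1
    | succ n ih =>
      rw [hrec n, div_le_one (hden (r n))]
      nlinarith [sq_nonneg (r n - 1)]
  have hmono : Monotone r := by
    apply monotone_nat_of_le_succ
    intro n
    rw [hrec n, le_div_iff₀ (hden (r n))]
    nlinarith [hpos n, hle n, mul_nonneg (hpos n).le (sub_nonneg.2 (hle n))]
  refine ⟨hmono, hle, ?_⟩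
  have hbdd : BddAbove (Set.range r) := ⟨1, by rintro x ⟨k, rfl⟩; exact hle k⟩
  have hT : Filter.Tendsto r Filter.atTop (nhds (⨆ k, r k)) :=
    tendsto_atTop_ciSup hmono hbdd
  set L := ⨆ k, r k with hL
  have hL0 : 0 < L := lt_of_lt_of_le h0 (le_ciSup hbdd 0)
  have hL1 : L ≤ 1 := ciSup_le hle
  have hT1 : Filter.Tendsto (fun k => r (k + 1)) Filter.atTop (nhds L) :=
    hT.comp (Filter.tendsto_add_atTop_nat 1)
  have hT2 : Filter.Tendsto (fun k => r k * (r k + 2) / (2 * r k ^ 2 + 1))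
      Filter.atTop (nhds (L * (L + 2) / (2 * L ^ 2 + 1))) := by
    exact Filter.Tendsto.div (by exact (hT.mul (hT.add tendsto_const_nhds)))
      (by exact ((tendsto_const_nhds.mul (hT.pow 2)).add tendsto_const_nhds))
      (by positivity)
  have heq : L * (L + 2) / (2 * L ^ 2 + 1) = L := by
    apply tendsto_nhds_unique (by simpa [hrec] using hT1) hT2 |>.symm
  rw [div_eq_iff (by positivity : (2 * L ^ 2 + 1 : ℝ) ≠ 0)] at heq
  have : L = 1 := by nlinarith [mul_pos hL0 hL0, mul_pos hL0 (mul_pos hL0 hL0)]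
  rwa [this] at hT
end

section
/- For every ε > 0 and every m, there exist an integer n ≥ m and a Steiner triple system S on n vertices such that mc_3(S) ≤ (2/3 + ε)·n. -/
universe u

/- ===================  mc bound from a "free index" coloring  =================== -/

open Classical in
/-- If every edge of `E` misses one of the three sets `X i`, then `mc 3 E ≤ n - x`
where `x` is a lower bound for the cards of the `X i`. -/
lemma mc_le_of_free {n x : ℕ} (E : Finset (Finset (Fin n))) (X : Fin 3 → Finset (Fin n))
    (hx : ∀ i, x ≤ (X i).card) (hxn : x < n)
    (hprop : ∀ e ∈ E, ∃ i, ∀ v ∈ e, v ∉ X i) :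
    mc 3 E ≤ n - x := by
  classical
  have hn : 0 < n := lt_of_le_of_lt (Nat.zero_le x) hxn
  set χ : Finset (Fin n) → Fin 3 :=
    fun e => if h : ∃ i : Fin 3, ∀ v ∈ e, v ∉ X i then h.choose else 0 with hχ
  have chi_spec : ∀ e ∈ E, ∀ v ∈ e, v ∉ X (χ e) := by
    intro e he
    have h : ∃ i : Fin 3, ∀ v ∈ e, v ∉ X i := hprop e he
    simpa [hχ, dif_pos h] using h.choose_spec
  -- any vertex incident to a color-c edge avoids X c
  have adj_avoid : ∀ (c : Fin 3) (u w : Fin n),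
      (colorGraph E χ c).Adj u w → u ∉ X c := by
    rintro c u w ⟨-, e, he, hc, hu, -⟩
    have := chi_spec e he u hu
    rwa [hc] at this
  have comp_bound : ∀ (c : Fin 3) (K : (colorGraph E χ c).ConnectedComponent),
      K.supp.ncard ≤ n - x := by
    intro c K
    by_cases hall : ∀ u ∈ K.supp, u ∉ X c
    · have hsub : K.supp ⊆ (((Finset.univ : Finset (Fin n)) \ X c) : Finset (Fin n)) := by
        intro u hu
        simp only [Finset.coe_sdiff, Finset.coe_univ, Set.mem_diff, Set.mem_univ, true_and,
          Finset.mem_coe]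
        exact fun hmem => hall u hu hmem
      calc K.supp.ncard ≤ (((Finset.univ : Finset (Fin n)) \ X c : Finset (Fin n)) : Set (Fin n)).ncard :=
            Set.ncard_le_ncard hsub (Finset.finite_toSet _)
        _ = ((Finset.univ : Finset (Fin n)) \ X c).card := Set.ncard_coe_finset _
        _ ≤ n - x := by
            have h1 : ((Finset.univ : Finset (Fin n)) \ X c).card
                = n - (X c).card := by
              rw [Finset.card_sdiff_of_subset (Finset.subset_univ _), Finset.card_univ, Fintype.card_fin]
            rw [h1]
            exact Nat.sub_le_sub_left (hx c) n
    · push_neg at hall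
      obtain ⟨u, hu, huX⟩ := hall
      -- every element of supp equals u
      have hsingle : K.supp = {u} := by
        apply Set.eq_singleton_iff_unique_mem.2
        refine ⟨hu, ?_⟩
        intro w hw
        have hreach : (colorGraph E χ c).Reachable u w := by
          have h1 : (colorGraph E χ c).connectedComponentMk w = K := hw
          have h2 : (colorGraph E χ c).connectedComponentMk u = K := hu
          exact (SimpleGraph.ConnectedComponent.exact (h2.trans h1.symm))
        obtain ⟨p⟩ := hreach
        cases p with
        | nil => rfl
        | cons h q => exact absurd (adj_avoid c u _ h) (by simpa using huX)
      rw [hsingle]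
      simpa using Nat.one_le_iff_ne_zero.2 (by omega)
  have hmax : maxMonoComponent 3 E χ ≤ n - x := by
    apply csSup_le
    · exact ⟨((colorGraph E χ 0).connectedComponentMk (⟨0, hn⟩ : Fin n)).supp.ncard, 0,
        (colorGraph E χ 0).connectedComponentMk (⟨0, hn⟩ : Fin n), rfl⟩
    · rintro m ⟨c, K, rfl⟩
      exact comp_bound c K
  calc mc 3 E ≤ maxMonoComponent 3 E χ := Nat.sInf_le ⟨χ, rfl⟩
    _ ≤ n - x := hmax

/- ===================  transport of STS along an equivalence  =================== -/

lemma isSTS_map {V W : Type u} [DecidableEq V] [DecidableEq W] (f : V ≃ W)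
    {E : Finset (Finset V)} (h : IsSTS E) :
    IsSTS (E.image (fun e => e.image f)) := by
  classical
  obtain ⟨hcard, hpair⟩ := h
  constructor
  · intro e he
    obtain ⟨e', he', rfl⟩ := Finset.mem_image.1 he
    rw [Finset.card_image_of_injective _ f.injective]
    exact hcard e' he'
  · intro a b hab
    obtain ⟨e, ⟨heE, hx, hy⟩, huniq⟩ := hpair (f.symm a) (f.symm b)
      (fun hcon => hab (by simpa using congrArg f hcon))
    refine ⟨e.image f, ⟨Finset.mem_image_of_mem _ heE, ?_, ?_⟩, ?_⟩
    · exact Finset.mem_image.2 ⟨_, hx, by simp⟩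
    · exact Finset.mem_image.2 ⟨_, hy, by simp⟩
    · rintro e' ⟨he', ha', hb'⟩
      obtain ⟨e'', he'', rfl⟩ := Finset.mem_image.1 he'
      have h1 : f.symm a ∈ e'' := by
        obtain ⟨z, hz, hz2⟩ := Finset.mem_image.1 ha'
        simpa [← hz2] using hz
      have h2 : f.symm b ∈ e'' := by
        obtain ⟨z, hz, hz2⟩ := Finset.mem_image.1 hb'
        simpa [← hz2] using hz
      rw [huniq e'' ⟨he'', h1, h2⟩]


/-- A "good" Steiner triple system: an STS on `n` vertices together with three disjoint
`x`-sets such that every triple misses one of them. -/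
structure GS (n x : ℕ) where
  V : Type
  fV : Fintype V
  dV : DecidableEq V
  E : Finset (Finset V)
  X : Fin 3 → Finset V
  cardV : @Fintype.card V fV = n
  cardX : ∀ i, (X i).card = x
  disj : ∀ i j : Fin 3, i ≠ j → ∀ v, v ∈ X i → v ∉ X j
  sts : IsSTS E
  prop : ∀ e ∈ E, ∃ i, ∀ v ∈ e, v ∉ X i
  hodd : Odd n
  hxn : 3 * x + 3 ≤ n

def seedGS : GS 3 0 where
  V := Fin 3
  fV := inferInstance
  dV := inferInstance
  E := {Finset.univ}
  X := fun _ => ∅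
  cardV := by simp
  cardX := by simp
  disj := by simp
  sts := by
    constructor
    · intro e he; simp only [Finset.mem_singleton] at he; simp [he]
    · intro a b hab
      refine ⟨Finset.univ, ⟨by simp, by simp, by simp⟩, ?_⟩
      rintro e ⟨he, -, -⟩
      simpa using he
  prop := by intro e he; exact ⟨0, by simp⟩
  hodd := ⟨1, rfl⟩
  hxn := by norm_num

/-- Gluing bijections between parts: given three disjoint source sets and three disjoint
target sets of matching cards (and matching totals), there is a global bijection
matching parts. -/
lemma exists_partEquiv {V : Type} [Fintype V] [DecidableEq V] {n : ℕ}
    (X : Fin 3 → Finset V) (T : Fin 3 → Finset (Fin n))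
    (hdX : ∀ i j, i ≠ j → ∀ v, v ∈ X i → v ∉ X j)
    (hdT : ∀ i j, i ≠ j → ∀ z, z ∈ T i → z ∉ T j)
    (hc : ∀ i, (X i).card = (T i).card)
    (htot : Fintype.card V = n) :
    ∃ s : V ≃ Fin n, ∀ i v, v ∈ X i ↔ s v ∈ T i := by
  classical
  have e0 : {v // v ∈ X 0} ≃ {z // z ∈ T 0} := (X 0).equivOfCardEq (hc 0)
  have e1 : {v // v ∈ X 1} ≃ {z // z ∈ T 1} := (X 1).equivOfCardEq (hc 1)
  have e2 : {v // v ∈ X 2} ≃ {z // z ∈ T 2} := (X 2).equivOfCardEq (hc 2)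
  set U : Finset V := X 0 ∪ X 1 ∪ X 2 with hU
  set S : Finset (Fin n) := T 0 ∪ T 1 ∪ T 2 with hS
  have cardU : U.card = (X 0).card + (X 1).card + (X 2).card := by
    rw [hU, Finset.card_union_of_disjoint, Finset.card_union_of_disjoint]
    · exact Finset.disjoint_left.2 (hdX 0 1 (by decide))
    · apply Finset.disjoint_union_left.2
      exact ⟨Finset.disjoint_left.2 (hdX 0 2 (by decide)),
        Finset.disjoint_left.2 (hdX 1 2 (by decide))⟩
  have cardS : S.card = (T 0).card + (T 1).card + (T 2).card := by
    rw [hS, Finset.card_union_of_disjoint, Finset.card_union_of_disjoint]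
    · exact Finset.disjoint_left.2 (hdT 0 1 (by decide))
    · apply Finset.disjoint_union_left.2
      exact ⟨Finset.disjoint_left.2 (hdT 0 2 (by decide)),
        Finset.disjoint_left.2 (hdT 1 2 (by decide))⟩
  have hcompl : (Finset.univ \ U).card = (Finset.univ \ S).card := by
    rw [Finset.card_sdiff_of_subset (Finset.subset_univ _), Finset.card_sdiff_of_subset (Finset.subset_univ _),
      Finset.card_univ, Finset.card_univ, htot, Fintype.card_fin, cardU, cardS,
      hc 0, hc 1, hc 2]
  have eC : {v // v ∈ Finset.univ \ U} ≃ {z // z ∈ Finset.univ \ S} :=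
    (Finset.univ \ U).equivOfCardEq hcompl
  set f : V → Fin n := fun v =>
    if h0 : v ∈ X 0 then (e0 ⟨v, h0⟩ : {z // z ∈ T 0}).1
    else if h1 : v ∈ X 1 then (e1 ⟨v, h1⟩).1
    else if h2 : v ∈ X 2 then (e2 ⟨v, h2⟩).1
    else (eC ⟨v, by simp [hU, h0, h1, h2]⟩).1 with hf
  -- membership transfer
  have hmem : ∀ i v, v ∈ X i ↔ f v ∈ T i := by
    intro i v
    by_cases h0 : v ∈ X 0
    · have hfv : f v = (e0 ⟨v, h0⟩).1 := by simp [hf, h0]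
      have hT0 : f v ∈ T 0 := by rw [hfv]; exact (e0 ⟨v, h0⟩).2
      fin_cases i
      · simpa using ⟨fun _ => hT0, fun _ => h0⟩
      · constructor
        · intro hmem1; exact absurd h0 (hdX 1 0 (by decide) v hmem1)
        · intro hmem1; exact absurd hmem1 (hdT 0 1 (by decide) _ hT0)
      · constructor
        · intro hmem1; exact absurd h0 (hdX 2 0 (by decide) v hmem1)
        · intro hmem1; exact absurd hmem1 (hdT 0 2 (by decide) _ hT0)
    · by_cases h1 : v ∈ X 1
      · have hfv : f v = (e1 ⟨v, h1⟩).1 := by simp [hf, h0, h1]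
        have hT1 : f v ∈ T 1 := by rw [hfv]; exact (e1 ⟨v, h1⟩).2
        fin_cases i
        · constructor
          · intro hmem1; exact absurd hmem1 h0
          · intro hmem1; exact absurd hmem1 (hdT 1 0 (by decide) _ hT1)
        · simpa using ⟨fun _ => hT1, fun _ => h1⟩
        · constructor
          · intro hmem1; exact absurd h1 (hdX 2 1 (by decide) v hmem1)
          · intro hmem1; exact absurd hmem1 (hdT 1 2 (by decide) _ hT1)
      · by_cases h2 : v ∈ X 2
        · have hfv : f v = (e2 ⟨v, h2⟩).1 := by simp [hf, h0, h1, h2]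
          have hT2 : f v ∈ T 2 := by rw [hfv]; exact (e2 ⟨v, h2⟩).2
          fin_cases i
          · constructor
            · intro hmem1; exact absurd hmem1 h0
            · intro hmem1; exact absurd hmem1 (hdT 2 0 (by decide) _ hT2)
          · constructor
            · intro hmem1; exact absurd hmem1 h1
            · intro hmem1; exact absurd hmem1 (hdT 2 1 (by decide) _ hT2)
          · simpa using ⟨fun _ => hT2, fun _ => h2⟩
        · have hfv : f v = (eC ⟨v, by simp [hU, h0, h1, h2]⟩).1 := by simp [hf, h0, h1, h2]
          have hTC : f v ∈ Finset.univ \ S := by rw [hfv]; exact (eC _).2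
          have hfnot : ∀ j, f v ∉ T j := by
            intro j hj
            have := Finset.mem_sdiff.1 hTC
            exact this.2 (by
              rcases (show j = 0 ∨ j = 1 ∨ j = 2 by omega) with h | h | h <;>
                subst h <;> simp [hS, hj])
          fin_cases i
          · exact ⟨fun h => absurd h h0, fun h => absurd h (hfnot 0)⟩
          · exact ⟨fun h => absurd h h1, fun h => absurd h (hfnot 1)⟩
          · exact ⟨fun h => absurd h h2, fun h => absurd h (hfnot 2)⟩
  -- injectivity
  have hinj : Function.Injective f := by
    intro v w hvw
    by_cases h0 : v ∈ X 0
    · have hw0 : w ∈ X 0 := (hmem 0 w).2 (hvw ▸ (hmem 0 v).1 h0)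
      have : (e0 ⟨v, h0⟩ : {z // z ∈ T 0}).1 = (e0 ⟨w, hw0⟩).1 := by
        have h1 : f v = (e0 ⟨v, h0⟩).1 := by simp [hf, h0]
        have h2 : f w = (e0 ⟨w, hw0⟩).1 := by simp [hf, hw0]
        rw [← h1, ← h2, hvw]
      have := e0.injective (Subtype.ext this)
      exact congrArg Subtype.val this
    · by_cases h1 : v ∈ X 1
      · have hw1 : w ∈ X 1 := (hmem 1 w).2 (hvw ▸ (hmem 1 v).1 h1)
        have heq : (e1 ⟨v, h1⟩ : {z // z ∈ T 1}).1 = (e1 ⟨w, hw1⟩).1 := by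
          have ha : f v = (e1 ⟨v, h1⟩).1 := by simp [hf, h0, h1]
          have hw0 : w ∉ X 0 := fun hc => h0 ((hmem 0 v).2 (hvw ▸ (hmem 0 w).1 hc))
          have hb : f w = (e1 ⟨w, hw1⟩).1 := by simp [hf, hw0, hw1]
          rw [← ha, ← hb, hvw]
        exact congrArg Subtype.val (e1.injective (Subtype.ext heq))
      · by_cases h2 : v ∈ X 2
        · have hw2 : w ∈ X 2 := (hmem 2 w).2 (hvw ▸ (hmem 2 v).1 h2)
          have heq : (e2 ⟨v, h2⟩ : {z // z ∈ T 2}).1 = (e2 ⟨w, hw2⟩).1 := by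
            have ha : f v = (e2 ⟨v, h2⟩).1 := by simp [hf, h0, h1, h2]
            have hw0 : w ∉ X 0 := fun hc => h0 ((hmem 0 v).2 (hvw ▸ (hmem 0 w).1 hc))
            have hw1 : w ∉ X 1 := fun hc => h1 ((hmem 1 v).2 (hvw ▸ (hmem 1 w).1 hc))
            have hb : f w = (e2 ⟨w, hw2⟩).1 := by simp [hf, hw0, hw1, hw2]
            rw [← ha, ← hb, hvw]
          exact congrArg Subtype.val (e2.injective (Subtype.ext heq))
        · have hw0 : w ∉ X 0 := fun hc => h0 ((hmem 0 v).2 (hvw ▸ (hmem 0 w).1 hc))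
          have hw1 : w ∉ X 1 := fun hc => h1 ((hmem 1 v).2 (hvw ▸ (hmem 1 w).1 hc))
          have hw2 : w ∉ X 2 := fun hc => h2 ((hmem 2 v).2 (hvw ▸ (hmem 2 w).1 hc))
          have ha : f v = (eC ⟨v, by simp [hU, h0, h1, h2]⟩).1 := by simp [hf, h0, h1, h2]
          have hb : f w = (eC ⟨w, by simp [hU, hw0, hw1, hw2]⟩).1 := by
            simp [hf, hw0, hw1, hw2]
          have heq : (eC ⟨v, by simp [hU, h0, h1, h2]⟩ : {z // z ∈ Finset.univ \ S}).1
              = (eC ⟨w, by simp [hU, hw0, hw1, hw2]⟩).1 := by rw [← ha, ← hb, hvw]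
          exact congrArg Subtype.val (eC.injective (Subtype.ext heq))
  have hbij : Function.Bijective f := by
    have : Fintype.card V = Fintype.card (Fin n) := by simp [htot]
    exact (Fintype.bijective_iff_injective_and_card f).2 ⟨hinj, this⟩
  exact ⟨Equiv.ofBijective f hbij, fun i v => by
    simpa using hmem i v⟩


section Double


variable {n x : ℕ}

/-- offsets of the arcs for the new parts in `ZMod n`. -/
def oW (a : ℕ) : Fin 3 → ℕ := fun i => i.val * a
/-- offsets of the target arcs for the old parts (in `Fin n`). -/
def oT (a : ℕ) : Fin 3 → ℕ := fun i => (2 - i.val) * a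

/-- the card of a val-interval in `ZMod n`. -/
lemma card_arcZ (n lo len : ℕ) [NeZero n] (h : lo + len ≤ n) :
    (Finset.filter (fun z : ZMod n => lo ≤ z.val ∧ z.val < lo + len) Finset.univ).card
      = len := by
  classical
  conv_rhs => rw [← Finset.card_range len]
  apply Finset.card_bij (fun z _ => z.val - lo)
  · intro z hz
    simp only [Finset.mem_filter] at hz
    simp only [Finset.mem_range]
    omega
  · intro z hz w hw hzw
    simp only [Finset.mem_filter] at hz hw
    have : z.val = w.val := by omega
    exact ZMod.val_injective _ this
  · intro j hj
    simp only [Finset.mem_range] at hj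
    refine ⟨((lo + j : ℕ) : ZMod n), ?_, ?_⟩
    · have hval : ((lo + j : ℕ) : ZMod n).val = lo + j :=
        ZMod.val_cast_of_lt (by omega)
      simp only [Finset.mem_filter, hval]
      exact ⟨Finset.mem_univ _, by omega, by omega⟩
    · have hval : ((lo + j : ℕ) : ZMod n).val = lo + j :=
        ZMod.val_cast_of_lt (by omega)
      omega

lemma card_arcF (n lo len : ℕ) (h : lo + len ≤ n) :
    (Finset.filter (fun z : Fin n => lo ≤ z.val ∧ z.val < lo + len) Finset.univ).card
      = len := by
  classical
  conv_rhs => rw [← Finset.card_range len]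
  apply Finset.card_bij (fun z _ => z.val - lo)
  · intro z hz
    simp only [Finset.mem_filter] at hz
    simp only [Finset.mem_range]
    omega
  · intro z hz w hw hzw
    simp only [Finset.mem_filter] at hz hw
    exact Fin.ext (by omega)
  · intro j hj
    simp only [Finset.mem_range] at hj
    refine ⟨⟨lo + j, by omega⟩, ?_, ?_⟩
    · simp only [Finset.mem_filter]
      exact ⟨Finset.mem_univ _, by omega, by omega⟩
    · simp

/-- The key arithmetic fact: a sum of elements of two `W`-arcs has its value outside
a target arc. -/
lemma sum_avoid {n : ℕ} [NeZero n] (a xx α β γ : ℕ)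
    (hC1 : γ + xx ≤ α + β) (hC2 : α + β + 2*a ≤ n + γ + 1)
    (p q : ZMod n) (hp : α ≤ p.val ∧ p.val < α + a) (hq : β ≤ q.val ∧ q.val < β + a) :
    ¬(γ ≤ (p + q).val ∧ (p + q).val < γ + xx) := by
  have hval : (p + q).val = (p.val + q.val) % n := ZMod.val_add p q
  rintro ⟨h1, h2⟩
  have hnpos : 0 < n := Nat.pos_of_ne_zero (NeZero.ne n)
  rcases Nat.lt_or_ge (p.val + q.val) n with hlt | hge
  · rw [Nat.mod_eq_of_lt hlt] at hval
    omega
  · have h2n : p.val + q.val < 2 * n := by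
      have := p.val_lt
      have := q.val_lt
      omega
    have : (p.val + q.val) % n = p.val + q.val - n := by
      rw [Nat.mod_eq_sub_mod hge, Nat.mod_eq_of_lt (by omega)]
    rw [this] at hval
    omega


end Double

section DoubleDef

variable {n x : ℕ}

/-- The doubling step. -/
noncomputable def doubleGS (G : GS n x) : GS (2*n+1) (x + n/3) := by
  classical
  letI := G.fV
  letI := G.dV
  set a := n / 3 with ha
  have hn3 : 3 ≤ n := le_trans (by omega) G.hxn
  haveI : NeZero n := ⟨by omega⟩
  have hdm := Nat.div_add_mod n 3
  have hmod3 : n % 3 < 3 := Nat.mod_lt _ (by norm_num)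
  set b := n + 1 - 3 * a with hb
  have h3a : 3 * a + b = n + 1 := by omega
  have hb1 : 1 ≤ b := by omega
  have hb3 : b ≤ 3 := by omega
  have hxa : x + 1 ≤ a := by
    rw [ha, Nat.le_div_iff_mul_le (by norm_num)]
    have := G.hxn
    omega
  have ha1 : 1 ≤ a := by omega
  -- target arcs in `Fin n`
  set T : Fin 3 → Finset (Fin n) :=
    fun i => Finset.filter (fun z => oT a i ≤ z.val ∧ z.val < oT a i + x) Finset.univ with hT
  have hTcard : ∀ i, (T i).card = x := by
    intro i
    rw [hT]
    apply card_arcF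
    have hi3 := i.isLt
    simp only [oT]
    rcases (show i.val = 0 ∨ i.val = 1 ∨ i.val = 2 by omega) with h | h | h <;> rw [h] <;> omega
  have hTdisj : ∀ i j : Fin 3, i ≠ j → ∀ z, z ∈ T i → z ∉ T j := by
    intro i j hij z hzi hzj
    rw [hT] at hzi hzj
    simp only [Finset.mem_filter] at hzi hzj
    simp only [Finset.mem_filter, oT] at hzi hzj
    have hne : i.val ≠ j.val := fun h => hij (Fin.ext h)
    rcases (show i.val = 0 ∨ i.val = 1 ∨ i.val = 2 by omega) with h | h | h <;>
      rcases (show j.val = 0 ∨ j.val = 1 ∨ j.val = 2 by omega) with h' | h' | h' <;>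
        rw [h] at hzi <;> rw [h'] at hzj <;> omega
  have hex := exists_partEquiv G.X T G.disj hTdisj
    (fun i => by rw [G.cardX, hTcard]) G.cardV
  set s := hex.choose with hsdef
  have hs : ∀ i v, v ∈ G.X i ↔ s v ∈ T i := hex.choose_spec
  set sz : G.V → ZMod n := fun v => ((s v).val : ℕ) with hsz
  have hszval : ∀ v, (sz v).val = (s v).val := fun v => ZMod.val_cast_of_lt (s v).isLt
  have hsmem : ∀ i v, v ∈ G.X i ↔ (oT a i ≤ (sz v).val ∧ (sz v).val < oT a i + x) := by
    intro i v
    rw [hs i v, hT, hszval]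
    simp
  have hszinj : Function.Injective sz := by
    intro u v h
    apply s.injective
    apply Fin.ext
    rw [← hszval u, ← hszval v, h]
  have hszsurj : Function.Surjective sz := by
    intro z
    refine ⟨s.symm ⟨z.val, z.val_lt⟩, ?_⟩
    rw [hsz]
    simp only [Equiv.apply_symm_apply]
    exact ZMod.natCast_rightInverse z
  set dd : ZMod n := (((n+1)/2 : ℕ) : ZMod n) with hdd
  have h2dd : (2 : ZMod n) * dd = 1 := by
    obtain ⟨t, ht⟩ := G.hodd
    have h1 : (2 * ((n+1)/2)) = n + 1 := by omega
    have h2 : ((2 * ((n+1)/2) : ℕ) : ZMod n) = ((n + 1 : ℕ) : ZMod n) := by rw [h1]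
    calc (2 : ZMod n) * dd = ((2 * ((n+1)/2) : ℕ) : ZMod n) := by rw [hdd]; push_cast; ring
      _ = ((n+1 : ℕ) : ZMod n) := h2
      _ = 1 := by push_cast [ZMod.natCast_self]; ring
  -- W arcs in ZMod n
  set W : Fin 3 → Finset (ZMod n) :=
    fun i => Finset.filter (fun z => oW a i ≤ z.val ∧ z.val < oW a i + a) Finset.univ with hW
  have hWcard : ∀ i, (W i).card = a := by
    intro i
    rw [hW]
    apply card_arcZ
    have hi3 := i.isLt
    simp only [oW]
    rcases (show i.val = 0 ∨ i.val = 1 ∨ i.val = 2 by omega) with h | h | h <;> rw [h] <;> omega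
  have hWdisj : ∀ i j : Fin 3, i ≠ j → ∀ z, z ∈ W i → z ∉ W j := by
    intro i j hij z hzi hzj
    rw [hW] at hzi hzj
    simp only [Finset.mem_filter] at hzi hzj
    simp only [Finset.mem_filter, oW] at hzi hzj
    have hne : i.val ≠ j.val := fun h => hij (Fin.ext h)
    rcases (show i.val = 0 ∨ i.val = 1 ∨ i.val = 2 by omega) with h | h | h <;>
      rcases (show j.val = 0 ∨ j.val = 1 ∨ j.val = 2 by omega) with h' | h' | h' <;>
        rw [h] at hzi <;> rw [h'] at hzj <;> omega
  -- triples
  set tOld : Finset G.V → Finset (G.V ⊕ Option (ZMod n)) :=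
    fun e => e.image Sum.inl with htOld
  set tPair : G.V → ZMod n → Finset (G.V ⊕ Option (ZMod n)) :=
    fun v p => {Sum.inl v, Sum.inr (some p), Sum.inr (some (sz v - p))} with htPair
  set tInf : G.V → Finset (G.V ⊕ Option (ZMod n)) :=
    fun v => {Sum.inl v, Sum.inr none, Sum.inr (some (dd * sz v))} with htInf
  set E' : Finset (Finset (G.V ⊕ Option (ZMod n))) :=
    G.E.image tOld
      ∪ (((Finset.univ : Finset (G.V × ZMod n)).filter
          (fun vp => 2 * vp.2 ≠ sz vp.1)).image (fun vp => tPair vp.1 vp.2))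
      ∪ Finset.univ.image tInf with hE'
  have hmemE' : ∀ e' : Finset (G.V ⊕ Option (ZMod n)), e' ∈ E' ↔
      ((∃ e ∈ G.E, e' = tOld e) ∨ (∃ v p, 2 * p ≠ sz v ∧ e' = tPair v p)
        ∨ ∃ v, e' = tInf v) := by
    intro e'
    rw [hE']
    simp only [Finset.mem_union, Finset.mem_image, Finset.mem_filter, Finset.mem_univ,
      true_and, Prod.exists]
    constructor
    · rintro ((⟨e, he, rfl⟩ | ⟨v, p, hc, rfl⟩) | ⟨v, rfl⟩)
      · exact Or.inl ⟨e, he, rfl⟩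
      · exact Or.inr (Or.inl ⟨v, p, hc, rfl⟩)
      · exact Or.inr (Or.inr ⟨v, rfl⟩)
    · rintro (⟨e, he, rfl⟩ | ⟨v, p, hc, rfl⟩ | ⟨v, rfl⟩)
      · exact Or.inl (Or.inl ⟨e, he, rfl⟩)
      · exact Or.inl (Or.inr ⟨v, p, hc, rfl⟩)
      · exact Or.inr ⟨v, rfl⟩
  have hmem_tPair : ∀ (u : G.V ⊕ Option (ZMod n)) v p, u ∈ tPair v p ↔
      (u = Sum.inl v ∨ u = Sum.inr (some p) ∨ u = Sum.inr (some (sz v - p))) := by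
    intro u v p
    rw [htPair]
    simp
  have hmem_tInf : ∀ (u : G.V ⊕ Option (ZMod n)) v, u ∈ tInf v ↔
      (u = Sum.inl v ∨ u = Sum.inr none ∨ u = Sum.inr (some (dd * sz v))) := by
    intro u v
    rw [htInf]
    simp
  have hmem_tOld : ∀ (u : G.V ⊕ Option (ZMod n)) e, u ∈ tOld e ↔
      (∃ w ∈ e, u = Sum.inl w) := by
    intro u e
    rw [htOld]
    simp [eq_comm]
  have tPair_symm : ∀ v p, tPair v (sz v - p) = tPair v p := by
    intro v p
    simp only [htPair]
    rw [show sz v - (sz v - p) = p from by ring]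
    congr 1
    exact Finset.pair_comm _ _
  -- parts
  set X' : Fin 3 → Finset (G.V ⊕ Option (ZMod n)) :=
    fun i => (G.X i).image Sum.inl ∪ (W i).image (fun z => Sum.inr (some z)) with hX'
  have hmemX' : ∀ (u : G.V ⊕ Option (ZMod n)) i, u ∈ X' i ↔
      ((∃ v ∈ G.X i, u = Sum.inl v) ∨ ∃ z ∈ W i, u = Sum.inr (some z)) := by
    intro u i
    rw [hX']
    simp [eq_comm]
  have hcard3 : ∀ e' ∈ E', e'.card = 3 := by
    intro e' he'
    rw [hmemE'] at he'
    rcases he' with ⟨e, he, rfl⟩ | ⟨v, p, hfp, rfl⟩ | ⟨v, rfl⟩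
    · rw [htOld, Finset.card_image_of_injective _ Sum.inl_injective]
      exact G.sts.1 e he
    · have hne : p ≠ sz v - p := by
        intro hc
        apply hfp
        have : p + p = p + (sz v - p) := by rw [← hc]
        calc 2 * p = p + p := two_mul p
          _ = p + (sz v - p) := this
          _ = sz v := by ring
      rw [htPair]
      rw [Finset.card_insert_of_notMem (by simp [hne]),
        Finset.card_insert_of_notMem (by simp [hne]), Finset.card_singleton]
    · rw [htInf]
      rw [Finset.card_insert_of_notMem (by simp),
        Finset.card_insert_of_notMem (by simp), Finset.card_singleton]
  have swapEU : ∀ u w : G.V ⊕ Option (ZMod n),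
      (∃! e', e' ∈ E' ∧ u ∈ e' ∧ w ∈ e') → (∃! e', e' ∈ E' ∧ w ∈ e' ∧ u ∈ e') := by
    rintro u w ⟨e', ⟨h1, h2, h3⟩, hu⟩
    exact ⟨e', ⟨h1, h3, h2⟩, fun y ⟨a, b, c⟩ => hu y ⟨a, c, b⟩⟩
  have C1 : ∀ v₁ v₂ : G.V, v₁ ≠ v₂ →
      ∃! e', e' ∈ E' ∧ Sum.inl v₁ ∈ e' ∧ Sum.inl v₂ ∈ e' := by
    intro v₁ v₂ hne
    obtain ⟨e, ⟨he, h1, h2⟩, huniq⟩ := G.sts.2 v₁ v₂ hne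
    refine ⟨tOld e, ⟨(hmemE' _).2 (Or.inl ⟨e, he, rfl⟩),
      (hmem_tOld _ _).2 ⟨v₁, h1, rfl⟩, (hmem_tOld _ _).2 ⟨v₂, h2, rfl⟩⟩, ?_⟩
    rintro e' ⟨he', hu1, hu2⟩
    rw [hmemE'] at he'
    rcases he' with ⟨f, hf, rfl⟩ | ⟨v, p, hfp, rfl⟩ | ⟨v, rfl⟩
    · rw [hmem_tOld] at hu1 hu2
      obtain ⟨w1, hw1, hww1⟩ := hu1
      obtain ⟨w2, hw2, hww2⟩ := hu2
      have e1 : w1 = v₁ := by simpa using hww1.symm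
      have e2 : w2 = v₂ := by simpa using hww2.symm
      rw [e1] at hw1; rw [e2] at hw2
      rw [huniq f ⟨hf, hw1, hw2⟩]
    · rw [hmem_tPair] at hu1 hu2
      have e1 : v₁ = v := by
        rcases hu1 with h | h | h
        · simpa using h
        · simp at h
        · simp at h
      have e2 : v₂ = v := by
        rcases hu2 with h | h | h
        · simpa using h
        · simp at h
        · simp at h
      exact absurd (e1.trans e2.symm) hne
    · rw [hmem_tInf] at hu1 hu2
      have e1 : v₁ = v := by
        rcases hu1 with h | h | h
        · simpa using h
        · simp at h
        · simp at h
      have e2 : v₂ = v := by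
        rcases hu2 with h | h | h
        · simpa using h
        · simp at h
        · simp at h
      exact absurd (e1.trans e2.symm) hne
  have C2 : ∀ (v : G.V) (w : ZMod n),
      ∃! e', e' ∈ E' ∧ Sum.inl v ∈ e' ∧ Sum.inr (some w) ∈ e' := by
    intro v w
    by_cases hcase : 2 * w = sz v
    · have hwdd : dd * sz v = w := by
        rw [← hcase]
        calc dd * (2 * w) = (2 * dd) * w := by ring
          _ = w := by rw [h2dd, one_mul]
      refine ⟨tInf v, ⟨(hmemE' _).2 (Or.inr (Or.inr ⟨v, rfl⟩)),
        (hmem_tInf _ _).2 (Or.inl rfl),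
        (hmem_tInf _ _).2 (Or.inr (Or.inr (by rw [hwdd])))⟩, ?_⟩
      rintro e' ⟨he', hu1, hu2⟩
      rw [hmemE'] at he'
      rcases he' with ⟨f, hf, rfl⟩ | ⟨v', p, hfp, rfl⟩ | ⟨v', rfl⟩
      · rw [hmem_tOld] at hu2
        obtain ⟨w2, hw2, hww2⟩ := hu2
        simp at hww2
      · exfalso
        rw [hmem_tPair] at hu1 hu2
        have hv' : v = v' := by
          rcases hu1 with h | h | h
          · simpa using h
          · simp at h
          · simp at h
        rcases hu2 with h | h | h
        · simp at h
        · have hwp : w = p := by simpa using h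
          exact hfp (by rw [← hwp, ← hv']; exact hcase)
        · have hw' : w = sz v' - p := by simpa using h
          apply hfp
          have h2 : 2 * (sz v' - p) = sz v' := by rw [← hw', ← hv']; exact hcase
          linear_combination -h2
      · rw [hmem_tInf] at hu1
        have hv' : v = v' := by
          rcases hu1 with h | h | h
          · simpa using h
          · simp at h
          · simp at h
        rw [hv']
    · refine ⟨tPair v w, ⟨(hmemE' _).2 (Or.inr (Or.inl ⟨v, w, hcase, rfl⟩)),
        (hmem_tPair _ _ _).2 (Or.inl rfl), (hmem_tPair _ _ _).2 (Or.inr (Or.inl rfl))⟩, ?_⟩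
      rintro e' ⟨he', hu1, hu2⟩
      rw [hmemE'] at he'
      rcases he' with ⟨f, hf, rfl⟩ | ⟨v', p, hfp, rfl⟩ | ⟨v', rfl⟩
      · rw [hmem_tOld] at hu2
        obtain ⟨w2, hw2, hww2⟩ := hu2
        simp at hww2
      · rw [hmem_tPair] at hu1 hu2
        have hv' : v = v' := by
          rcases hu1 with h | h | h
          · simpa using h
          · simp at h
          · simp at h
        subst hv'
        rcases hu2 with h | h | h
        · simp at h
        · have hwp : w = p := by simpa using h
          rw [← hwp]
        · have hw' : w = sz v - p := by simpa using h
          rw [hw']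
          exact (tPair_symm v p).symm
      · exfalso
        rw [hmem_tInf] at hu1 hu2
        have hv' : v = v' := by
          rcases hu1 with h | h | h
          · simpa using h
          · simp at h
          · simp at h
        rcases hu2 with h | h | h
        · simp at h
        · simp at h
        · have hwdd : w = dd * sz v' := by simpa using h
          apply hcase
          rw [hwdd, ← hv']
          calc 2 * (dd * sz v) = (2 * dd) * sz v := by ring
            _ = sz v := by rw [h2dd, one_mul]
  have C3 : ∀ v : G.V, ∃! e', e' ∈ E' ∧ Sum.inl v ∈ e' ∧ Sum.inr (none : Option (ZMod n)) ∈ e' := by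
    intro v
    refine ⟨tInf v, ⟨(hmemE' _).2 (Or.inr (Or.inr ⟨v, rfl⟩)),
      (hmem_tInf _ _).2 (Or.inl rfl), (hmem_tInf _ _).2 (Or.inr (Or.inl rfl))⟩, ?_⟩
    rintro e' ⟨he', hu1, hu2⟩
    rw [hmemE'] at he'
    rcases he' with ⟨f, hf, rfl⟩ | ⟨v', p, hfp, rfl⟩ | ⟨v', rfl⟩
    · rw [hmem_tOld] at hu2
      obtain ⟨w2, hw2, hww2⟩ := hu2
      simp at hww2
    · exfalso
      rw [hmem_tPair] at hu2
      rcases hu2 with h | h | h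
      · simp at h
      · simp at h
      · simp at h
    · rw [hmem_tInf] at hu1
      have hv' : v = v' := by
        rcases hu1 with h | h | h
        · simpa using h
        · simp at h
        · simp at h
      rw [hv']
  have C4 : ∀ w w' : ZMod n, w ≠ w' →
      ∃! e', e' ∈ E' ∧ Sum.inr (some w) ∈ e' ∧ Sum.inr (some w') ∈ e' := by
    intro w w' hne
    obtain ⟨v, hv⟩ := hszsurj (w + w')
    have hfpw : 2 * w ≠ sz v := by
      rw [hv]
      intro hc
      exact hne (by linear_combination hc)
    have hthird : sz v - w = w' := by rw [hv]; ring
    refine ⟨tPair v w, ⟨(hmemE' _).2 (Or.inr (Or.inl ⟨v, w, hfpw, rfl⟩)),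
      (hmem_tPair _ _ _).2 (Or.inr (Or.inl rfl)),
      (hmem_tPair _ _ _).2 (Or.inr (Or.inr (by rw [hthird])))⟩, ?_⟩
    rintro e' ⟨he', hu1, hu2⟩
    rw [hmemE'] at he'
    rcases he' with ⟨f, hf, rfl⟩ | ⟨v', p, hfp, rfl⟩ | ⟨v', rfl⟩
    · rw [hmem_tOld] at hu1
      obtain ⟨w1, hw1, hww1⟩ := hu1
      simp at hww1
    · rw [hmem_tPair] at hu1 hu2
      have hw1 : w = p ∨ w = sz v' - p := by
        rcases hu1 with h | h | h
        · simp at h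
        · exact Or.inl (by simpa using h)
        · exact Or.inr (by simpa using h)
      have hw2 : w' = p ∨ w' = sz v' - p := by
        rcases hu2 with h | h | h
        · simp at h
        · exact Or.inl (by simpa using h)
        · exact Or.inr (by simpa using h)
      rcases hw1 with h1 | h1 <;> rcases hw2 with h2 | h2
      · exact absurd (h1.trans h2.symm) hne
      · have hsum : sz v' = w + w' := by rw [h1, h2]; ring
        have hvv : v' = v := hszinj (by rw [hv, hsum])
        rw [hvv, ← h1]
      · have hsum : sz v' = w + w' := by rw [h1, h2]; ring
        have hvv : v' = v := hszinj (by rw [hv, hsum])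
        rw [hvv] at h1 ⊢
        rw [← h2] at h1 ⊢
        rw [h1]
        exact (tPair_symm v w').symm
      · exact absurd (h1.trans h2.symm) hne
    · exfalso
      rw [hmem_tInf] at hu1 hu2
      have e1 : w = dd * sz v' := by
        rcases hu1 with h | h | h
        · simp at h
        · simp at h
        · simpa using h
      have e2 : w' = dd * sz v' := by
        rcases hu2 with h | h | h
        · simp at h
        · simp at h
        · simpa using h
      exact hne (e1.trans e2.symm)
  have C5 : ∀ w : ZMod n,
      ∃! e', e' ∈ E' ∧ Sum.inr (some w) ∈ e' ∧ Sum.inr (none : Option (ZMod n)) ∈ e' := by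
    intro w
    obtain ⟨v, hv⟩ := hszsurj (2 * w)
    have hdd2 : dd * sz v = w := by
      rw [hv]
      calc dd * (2 * w) = (2 * dd) * w := by ring
        _ = w := by rw [h2dd, one_mul]
    refine ⟨tInf v, ⟨(hmemE' _).2 (Or.inr (Or.inr ⟨v, rfl⟩)),
      (hmem_tInf _ _).2 (Or.inr (Or.inr (by rw [hdd2]))),
      (hmem_tInf _ _).2 (Or.inr (Or.inl rfl))⟩, ?_⟩
    rintro e' ⟨he', hu1, hu2⟩
    rw [hmemE'] at he'
    rcases he' with ⟨f, hf, rfl⟩ | ⟨v', p, hfp, rfl⟩ | ⟨v', rfl⟩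
    · rw [hmem_tOld] at hu1
      obtain ⟨w1, hw1, hww1⟩ := hu1
      simp at hww1
    · exfalso
      rw [hmem_tPair] at hu2
      rcases hu2 with h | h | h
      · simp at h
      · simp at h
      · simp at h
    · rw [hmem_tInf] at hu1
      have e1 : w = dd * sz v' := by
        rcases hu1 with h | h | h
        · simp at h
        · simp at h
        · simpa using h
      have h3 : 2 * (dd * sz v') = sz v' := by
        calc 2 * (dd * sz v') = (2 * dd) * sz v' := by ring
          _ = sz v' := by rw [h2dd, one_mul]
      have hss : sz v' = sz v := by
        rw [hv]
        have h4 : 2 * w = 2 * (dd * sz v') := by rw [← e1]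
        rw [h4]
        exact h3.symm
      rw [hszinj hss]
  have hsts : IsSTS E' := by
    constructor
    · exact hcard3
    · intro u w hne
      rcases u with v | z
      · rcases w with v' | z'
        · exact C1 v v' (fun h => hne (by rw [h]))
        · rcases z' with _ | w'
          · exact C3 v
          · exact C2 v w'
      · rcases w with v' | z'
        · rcases z with _ | wz
          · exact swapEU _ _ (C3 v')
          · exact swapEU _ _ (C2 v' wz)
        · rcases z with _ | wz <;> rcases z' with _ | wz'
          · exact absurd rfl hne
          · exact swapEU _ _ (C5 wz')
          · exact C5 wz
          · exact C4 wz wz' (fun h => hne (by rw [h]))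
  have hmW0 : ∀ z : ZMod n, z ∈ W 0 ↔ z.val < a := by
    intro z; rw [hW]; simp only [Finset.mem_filter, Finset.mem_univ, true_and, oW, Fin.val_zero, zero_mul, zero_add]; omega
  have hmW1 : ∀ z : ZMod n, z ∈ W 1 ↔ (a ≤ z.val ∧ z.val < 2*a) := by
    intro z; rw [hW]; simp only [Finset.mem_filter, Finset.mem_univ, true_and, oW]
    norm_num; omega
  have hmW2 : ∀ z : ZMod n, z ∈ W 2 ↔ (2*a ≤ z.val ∧ z.val < 3*a) := by
    intro z; rw [hW]; simp only [Finset.mem_filter, Finset.mem_univ, true_and, oW]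
    norm_num; omega
  have w0 : ∀ z : ZMod n, z ∈ W 0 → (0 ≤ z.val ∧ z.val < 0 + a) := by
    intro z h; have := (hmW0 z).1 h; omega
  have w1 : ∀ z : ZMod n, z ∈ W 1 → (a ≤ z.val ∧ z.val < a + a) := by
    intro z h; have := (hmW1 z).1 h; omega
  have w2 : ∀ z : ZMod n, z ∈ W 2 → (2*a ≤ z.val ∧ z.val < 2*a + a) := by
    intro z h; have := (hmW2 z).1 h; omega
  have hsm0 : ∀ v, v ∈ G.X 0 ↔ (2*a ≤ (sz v).val ∧ (sz v).val < 2*a + x) := by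
    intro v; rw [hsmem 0 v]; simp only [oT]; norm_num
  have hsm1 : ∀ v, v ∈ G.X 1 ↔ (a ≤ (sz v).val ∧ (sz v).val < a + x) := by
    intro v; rw [hsmem 1 v]; simp only [oT]; norm_num
  have hsm2 : ∀ v, v ∈ G.X 2 ↔ ((sz v).val < x) := by
    intro v; rw [hsmem 2 v]; simp only [oT]; norm_num
  have hprop : ∀ e' ∈ E', ∃ i, ∀ u ∈ e', u ∉ X' i := by
    intro e' he'
    rw [hmemE'] at he'
    rcases he' with ⟨e, he, rfl⟩ | ⟨v, p, hfp, rfl⟩ | ⟨v, rfl⟩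
    · obtain ⟨i, hi⟩ := G.prop e he
      refine ⟨i, ?_⟩
      intro u hu
      rw [hmem_tOld] at hu
      obtain ⟨w, hw, rfl⟩ := hu
      rw [hmemX']
      rintro (⟨v', hv', hvv⟩ | ⟨z, hz, hzz⟩)
      · exact hi w hw (by rwa [show v' = w from by simpa using hvv.symm] at hv')
      · simp at hzz
    · -- tPair v p
      set q : ZMod n := sz v - p with hqdef
      have hpq : p + q = sz v := by rw [hqdef]; ring
      have hqp : q + p = sz v := by rw [hqdef]; ring
      by_contra hcon
      push_neg at hcon
      have hfail : ∀ i : Fin 3, v ∈ G.X i ∨ p ∈ W i ∨ q ∈ W i := by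
        intro i
        obtain ⟨u, hu, huX⟩ := hcon i
        rw [hmem_tPair] at hu
        rw [hmemX'] at huX
        rcases hu with rfl | rfl | rfl
        · rcases huX with ⟨v', hv', hvv⟩ | ⟨z, hz, hzz⟩
          · exact Or.inl (by rwa [show v' = v from by simpa using hvv.symm] at hv')
          · simp at hzz
        · rcases huX with ⟨v', hv', hvv⟩ | ⟨z, hz, hzz⟩
          · simp at hvv
          · exact Or.inr (Or.inl (by rwa [show z = p from by simpa using hzz.symm] at hz))
        · rcases huX with ⟨v', hv', hvv⟩ | ⟨z, hz, hzz⟩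
          · simp at hvv
          · exact Or.inr (Or.inr (by rwa [show z = q from by simpa using hzz.symm] at hz))
      have key : ∀ (α β γ : ℕ), γ + x ≤ α + β → α + β + 2*a ≤ n + γ + 1 →
          ∀ p' q' : ZMod n, (α ≤ p'.val ∧ p'.val < α + a) → (β ≤ q'.val ∧ q'.val < β + a) →
          p' + q' = sz v → ¬(γ ≤ (sz v).val ∧ (sz v).val < γ + x) := by
        intro α β γ hc1 hc2 p' q' hp' hq' hpq'
        rw [← hpq']
        exact sum_avoid a x α β γ hc1 hc2 p' q' hp' hq'
      by_cases hv0 : v ∈ G.X 0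
      · have h1 := (hfail 1).resolve_left (G.disj 0 1 (by decide) v hv0)
        have h2 := (hfail 2).resolve_left (G.disj 0 2 (by decide) v hv0)
        have hT0 := (hsm0 v).1 hv0
        rcases h1 with h1 | h1 <;> rcases h2 with h2 | h2
        · exact hWdisj 1 2 (by decide) p h1 h2
        · exact key a (2*a) (2*a) (by omega) (by omega) p q (w1 p h1) (w2 q h2) hpq hT0
        · exact key (2*a) a (2*a) (by omega) (by omega) p q (w2 p h2) (w1 q h1) hpq hT0
        · exact hWdisj 1 2 (by decide) q h1 h2
      · by_cases hv1 : v ∈ G.X 1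
        · have h0 := (hfail 0).resolve_left hv0
          have h2 := (hfail 2).resolve_left (G.disj 1 2 (by decide) v hv1)
          have hT1 := (hsm1 v).1 hv1
          rcases h0 with h0 | h0 <;> rcases h2 with h2 | h2
          · exact hWdisj 0 2 (by decide) p h0 h2
          · exact key 0 (2*a) a (by omega) (by omega) p q (w0 p h0) (w2 q h2) hpq hT1
          · exact key (2*a) 0 a (by omega) (by omega) p q (w2 p h2) (w0 q h0) hpq hT1
          · exact hWdisj 0 2 (by decide) q h0 h2
        · by_cases hv2 : v ∈ G.X 2
          · have h0 := (hfail 0).resolve_left hv0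
            have h1 := (hfail 1).resolve_left hv1
            have hT2 := (hsm2 v).1 hv2
            rcases h0 with h0 | h0 <;> rcases h1 with h1 | h1
            · exact hWdisj 0 1 (by decide) p h0 h1
            · exact key 0 a 0 (by omega) (by omega) p q (w0 p h0) (w1 q h1) hpq ⟨by omega, by omega⟩
            · exact key a 0 0 (by omega) (by omega) p q (w1 p h1) (w0 q h0) hpq ⟨by omega, by omega⟩
            · exact hWdisj 0 1 (by decide) q h0 h1
          · have h0 := (hfail 0).resolve_left hv0
            have h1 := (hfail 1).resolve_left hv1
            have h2 := (hfail 2).resolve_left hv2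
            rcases h0 with h0 | h0 <;> rcases h1 with h1 | h1 <;> rcases h2 with h2 | h2
            · exact hWdisj 0 1 (by decide) p h0 h1
            · exact hWdisj 0 1 (by decide) p h0 h1
            · exact hWdisj 0 2 (by decide) p h0 h2
            · exact hWdisj 1 2 (by decide) q h1 h2
            · exact hWdisj 1 2 (by decide) p h1 h2
            · exact hWdisj 0 2 (by decide) q h0 h2
            · exact hWdisj 0 1 (by decide) q h0 h1
            · exact hWdisj 0 1 (by decide) q h0 h1
    · -- tInf v
      by_contra hcon
      push_neg at hcon
      have hfail : ∀ i : Fin 3, v ∈ G.X i ∨ (dd * sz v) ∈ W i := by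
        intro i
        obtain ⟨u, hu, huX⟩ := hcon i
        rw [hmem_tInf] at hu
        rw [hmemX'] at huX
        rcases hu with rfl | rfl | rfl
        · rcases huX with ⟨v', hv', hvv⟩ | ⟨z, hz, hzz⟩
          · exact Or.inl (by rwa [show v' = v from by simpa using hvv.symm] at hv')
          · simp at hzz
        · rcases huX with ⟨v', hv', hvv⟩ | ⟨z, hz, hzz⟩
          · simp at hvv
          · simp at hzz
        · rcases huX with ⟨v', hv', hvv⟩ | ⟨z, hz, hzz⟩
          · simp at hvv
          · exact Or.inr (by rwa [show z = dd * sz v from by simpa using hzz.symm] at hz)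
      by_cases hv0 : v ∈ G.X 0
      · exact hWdisj 1 2 (by decide) _
          ((hfail 1).resolve_left (G.disj 0 1 (by decide) v hv0))
          ((hfail 2).resolve_left (G.disj 0 2 (by decide) v hv0))
      · by_cases hv1 : v ∈ G.X 1
        · exact hWdisj 0 2 (by decide) _
            ((hfail 0).resolve_left hv0)
            ((hfail 2).resolve_left (G.disj 1 2 (by decide) v hv1))
        · exact hWdisj 0 1 (by decide) _
            ((hfail 0).resolve_left hv0)
            ((hfail 1).resolve_left hv1)
  exact {
    V := G.V ⊕ Option (ZMod n)
    fV := inferInstance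
    dV := inferInstance
    E := E'
    X := X'
    cardV := by
      simp only [Fintype.card_sum, Fintype.card_option, ZMod.card, G.cardV]
      omega
    cardX := by
      intro i
      rw [hX', Finset.card_union_of_disjoint, Finset.card_image_of_injective _ Sum.inl_injective,
        Finset.card_image_of_injective _ (fun a b h => by
          simpa using h), G.cardX, hWcard]
      · rw [Finset.disjoint_left]
        rintro u hu1 hu2
        obtain ⟨v, hv, rfl⟩ := Finset.mem_image.1 hu1
        obtain ⟨z, hz, hzz⟩ := Finset.mem_image.1 hu2
        exact absurd hzz (by simp)
    disj := by
      intro i j hij u hui huj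
      rw [hmemX'] at hui huj
      rcases hui with ⟨v, hv, rfl⟩ | ⟨z, hz, rfl⟩
      · rcases huj with ⟨v', hv', hvv⟩ | ⟨z, hz, hzz⟩
        · have hvv' : v' = v := by simpa using hvv.symm
          rw [hvv'] at hv'
          exact G.disj i j hij v hv hv'
        · simp at hzz
      · rcases huj with ⟨v', hv', hvv⟩ | ⟨z', hz', hzz⟩
        · simp at hvv
        · have hzz' : z' = z := by simpa using hzz.symm
          rw [hzz'] at hz'
          exact hWdisj i j hij z hz hz'
    sts := hsts
    prop := hprop
    hodd := ⟨n, by omega⟩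
    hxn := by
      have := G.hxn
      omega
  }

end DoubleDef

section Tower

structure Tow (k : ℕ) where
  n : ℕ
  x : ℕ
  G : GS n x
  hn : n = 2^(k+2) - 1
  hy : n ≤ 3*x + 3*k + 3

noncomputable def tower : ∀ k, Tow k
  | 0 => ⟨3, 0, seedGS, by norm_num, by norm_num⟩
  | (k+1) =>
    let t := tower k
    { n := 2*t.n+1
      x := t.x + t.n/3
      G := doubleGS t.G
      hn := by
        have h1 := t.hn
        have h2 : (2:ℕ)^(k+1+2) = 2 * 2^(k+2) := by ring
        have h3 : (1:ℕ) ≤ 2^(k+2) := Nat.one_le_two_pow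
        omega
      hy := by
        have h1 := t.hy
        have hdm := Nat.div_add_mod t.n 3
        have hmod : t.n % 3 < 3 := Nat.mod_lt _ (by norm_num)
        omega }

lemma four_pow_ge (c : ℕ) (hc : 1 ≤ c) : 4 * c^2 ≤ 4^c := by
  induction c with
  | zero => omega
  | succ d ih =>
    rcases Nat.eq_or_lt_of_le hc with h | h
    · simp [← h]
    · have hd : 1 ≤ d := by omega
      have := ih hd
      have h4 : 4^(d+1) = 4 * 4^d := by ring
      nlinarith [this]

end Tower


/-- For every `ε > 0` and every `m`, there exist `n ≥ m` and a Steiner triple system `S`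
on `n` vertices with `mc_3(S) ≤ (2/3 + ε)·n`. -/
theorem stmt16 (ε : ℝ) (hε : 0 < ε) (m : ℕ) :
    ∃ n : ℕ, m ≤ n ∧ ∃ E : Finset (Finset (Fin n)),
      IsSTS E ∧ (mc 3 E : ℝ) ≤ (2 / 3 + ε) * n := by
  classical
  set c : ℕ := max 1 ⌈1/ε⌉₊ with hc
  have hc1 : 1 ≤ c := le_max_left _ _
  set k : ℕ := 2*c + m + 1 with hk
  -- ℕ inequality: (k+1)*c ≤ 2^k
  have hNat : (k+1) * c ≤ 2^k := by
    have h1 : 4 * c^2 ≤ 4^c := four_pow_ge c hc1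
    have h2 : m + 2 ≤ 2^(m+1) := Nat.lt_two_pow_self (n := m+1)
    have h3 : (2:ℕ)^k = 4^c * 2^(m+1) := by
      rw [hk, show 2*c + m + 1 = 2*c + (m+1) from rfl, pow_add, pow_mul]
      norm_num
    have hmX : m ≤ 4*c*m := Nat.le_mul_of_pos_left m (by omega)
    have hX : 4*c*(m+2) = 4*c*m + 8*c := by ring
    have h5 : 2*c + m + 2 ≤ 4*c*(m+2) := by omega
    have h4 : (k+1)*c ≤ (4*c^2) * (m+2) := by
      calc (k+1)*c = (2*c+m+2)*c := by rw [hk]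
        _ ≤ (4*c*(m+2))*c := Nat.mul_le_mul_right _ h5
        _ = (4*c^2)*(m+2) := by ring
    calc (k+1)*c ≤ (4*c^2)*(m+2) := h4
      _ ≤ 4^c * 2^(m+1) := Nat.mul_le_mul h1 h2
      _ = 2^k := h3.symm
  set t := tower k with ht
  letI := t.G.fV
  letI := t.G.dV
  have hn2 : 2^k ≤ t.n := by
    rw [t.hn]
    have h2 : (2:ℕ)^k < 2^(k+2) := Nat.pow_lt_pow_right (by norm_num) (by omega)
    omega
  have hkn : k ≤ t.n := le_trans (Nat.le_of_lt (Nat.lt_two_pow_self (n := k))) hn2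
  have hmn : m ≤ t.n := by
    have hmk : m ≤ k := by rw [hk]; omega
    exact hmk.trans hkn
  -- transport to Fin n
  have hequiv : t.G.V ≃ Fin t.n := Fintype.equivFinOfCardEq t.G.cardV
  set E'' : Finset (Finset (Fin t.n)) := t.G.E.image (fun e => e.image hequiv) with hE''
  have hsts'' : IsSTS E'' := isSTS_map hequiv t.G.sts
  set X'' : Fin 3 → Finset (Fin t.n) := fun i => (t.G.X i).image hequiv with hX''
  have hprop'' : ∀ e ∈ E'', ∃ i, ∀ v ∈ e, v ∉ X'' i := by
    intro e he
    obtain ⟨f, hf, rfl⟩ := Finset.mem_image.1 he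
    obtain ⟨i, hi⟩ := t.G.prop f hf
    refine ⟨i, ?_⟩
    intro v hv
    obtain ⟨u, hu, rfl⟩ := Finset.mem_image.1 hv
    rw [hX'']
    intro hcon
    obtain ⟨u', hu', huu⟩ := Finset.mem_image.1 hcon
    have : u' = u := hequiv.injective huu
    rw [this] at hu'
    exact hi u hu hu'
  have hxcard : ∀ i, t.x ≤ (X'' i).card := by
    intro i
    rw [hX'', Finset.card_image_of_injective _ hequiv.injective, t.G.cardX]
  have hxlt : t.x < t.n := by
    have := t.G.hxn
    omega
  have hmc : mc 3 E'' ≤ t.n - t.x := mc_le_of_free E'' X'' hxcard hxlt hprop''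
  refine ⟨t.n, hmn, E'', hsts'', ?_⟩
  -- real arithmetic
  have hxn3 : 3 * t.x + 3 ≤ t.n := t.G.hxn
  have hyb : t.n ≤ 3 * t.x + 3*k + 3 := t.hy
  have hcpos : (0:ℝ) < c := by positivity
  have hinv : (1:ℝ)/ε ≤ c := by
    calc (1:ℝ)/ε ≤ ⌈1/ε⌉₊ := Nat.le_ceil _
      _ ≤ c := by exact_mod_cast Nat.cast_le.2 (le_max_right _ _)
  have h1εc : (1:ℝ) ≤ ε * c := by
    rw [div_le_iff₀ hε] at hinv
    linarith [hinv]
  have hkR : ((k:ℝ)+1) ≤ ε * 2^k := by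
    have hA : ((k:ℝ)+1) * c ≤ 2^k := by exact_mod_cast hNat
    nlinarith [hA, h1εc, hε, hcpos, sq_nonneg ((k:ℝ)+1)]
  have h2kn : ((2:ℝ)^k) ≤ t.n := by
    exact_mod_cast Nat.cast_le.2 hn2
  have hcast : ((t.n - t.x : ℕ) : ℝ) = (t.n : ℝ) - t.x := by
    rw [Nat.cast_sub (le_of_lt hxlt)]
  have hmcR : (mc 3 E'' : ℝ) ≤ (t.n : ℝ) - t.x := by
    rw [← hcast]
    exact_mod_cast Nat.cast_le.2 hmc
  have hybR : (t.n : ℝ) ≤ 3 * t.x + 3*k + 3 := by exact_mod_cast Nat.cast_le.2 hyb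
  have hfinal : (t.n : ℝ) - t.x ≤ (2/3 + ε) * t.n := by
    have hεn : 3*((k:ℝ)+1) ≤ 3 * (ε * t.n) := by
      have : ε * 2^k ≤ ε * t.n := by nlinarith [h2kn, hε]
      nlinarith [hkR, this]
    nlinarith [hybR, hεn]
  linarith [hmcR, hfinal]
end
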